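/- arXiv:2004.09885 — 9 statements merged into one kernel-verified Lean document; each statement's English description precedes it below -/
import Mathlib

section
/- Let P be a hereditary graph class, let G be a finite graph, and let W ⊆ V(G). Then (i) every maximal P set of G contains at most one maximal P set of the induced subgraph G[W]; and consequently (ii) the number of maximal P sets of G[W] is at most the number of maximal P sets of G. -/
attribute [local instance] Classical.propDecidable

/-- A *graph class*: a collection of finite simple graphs, given as a property of
simple graphs over every finite vertex type. -/
abbrev GraphClass : Type 1 :=
  ∀ (V : Type) [Fintype V], SimpleGraph V → Prop

/-- The graph class is a nonempty collection of graphs. -/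
def GraphClass.NonemptyClass (P : GraphClass) : Prop :=
  ∃ (V : Type) (_ : Fintype V) (G : SimpleGraph V), P V G

/-- The graph class is closed under isomorphism. -/
def GraphClass.IsoClosed (P : GraphClass) : Prop :=
  ∀ (V W : Type) (_ : Fintype V) (_ : Fintype W) (G : SimpleGraph V) (H : SimpleGraph W),
    _root_.Nonempty (G ≃g H) → (P V G ↔ P W H)

/-- The graph class is hereditary: it is closed under taking induced subgraphs. -/
def GraphClass.Hereditary (P : GraphClass) : Prop :=
  ∀ (V : Type) (_ : Fintype V) (G : SimpleGraph V) (S : Set V),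
    P V G → P (↥S) (G.induce S)

variable {V : Type} [Fintype V]

/-- `S ⊆ V(G)` is a `P` set of `G` if the induced subgraph `G[S]` belongs to `P`. -/
def IsPSet (P : GraphClass) (G : SimpleGraph V) (S : Set V) : Prop :=
  P (↥S) (G.induce S)

/-- `S` is a maximal `P` set of `G`: a `P` set with no proper superset that is a `P` set. -/
def IsMaxPSet (P : GraphClass) (G : SimpleGraph V) (S : Set V) : Prop :=
  IsPSet P G S ∧ ∀ T : Set V, S ⊂ T → ¬ IsPSet P G T

/-- `S` is a connected `P` set of `G`: a `P` set inducing a connected subgraph. -/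
def IsConnPSet (P : GraphClass) (G : SimpleGraph V) (S : Set V) : Prop :=
  IsPSet P G S ∧ (G.induce S).Connected

/-- `S` is a maximal connected `P` set of `G`: a connected `P` set contained in no
strictly larger connected `P` set. -/
def IsMaxConnPSet (P : GraphClass) (G : SimpleGraph V) (S : Set V) : Prop :=
  IsConnPSet P G S ∧ ∀ T : Set V, S ⊂ T → ¬ IsConnPSet P G T

/-- A forbidden set of `G` (with respect to the class `P`): an inclusion-minimal vertex
set inducing a subgraph that is not in `P`. -/
def IsForbiddenSet (P : GraphClass) (G : SimpleGraph V) (X : Set V) : Prop :=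
  ¬ IsPSet P G X ∧ ∀ Y : Set V, Y ⊂ X → IsPSet P G Y

/-! A maximal `P` set `T` of `G[W]` inside a `P` set `S` of `G` must be all of `S ∩ W`, which is
a `P` set of `G[W]` by heredity (and isomorphism invariance, to move between `G[W][·]` and
`G[·]`). So `T` is determined by any maximal `P` set of `G` containing it, and extending each `T`
to one is an injection. -/

noncomputable def induceInduceIso {α : Type*} (G : SimpleGraph α) (A : Set α) (B : Set A) :
    (G.induce A).induce B ≃g G.induce (Subtype.val '' B) where
  toEquiv := Equiv.Set.image Subtype.val B Subtype.val_injective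
  map_rel_iff' := by simp [Equiv.Set.image, Equiv.Set.imageOfInjOn]

section PSets

variable {P : GraphClass} {G : SimpleGraph V}

theorem isPSet_induce_iff (hiso : P.IsoClosed) (A : Set V) (B : Set A) :
    IsPSet P (G.induce A) B ↔ IsPSet P G (Subtype.val '' B) :=
  hiso _ _ _ _ _ _ ⟨induceInduceIso G A B⟩

theorem IsPSet.mono (hiso : P.IsoClosed) (hher : P.Hereditary) {A B : Set V}
    (hA : IsPSet P G A) (hBA : B ⊆ A) : IsPSet P G B := by
  have h := (isPSet_induce_iff hiso A (Subtype.val ⁻¹' B)).mp (hher _ _ _ _ hA)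
  rwa [Subtype.image_preimage_coe, Set.inter_eq_self_of_subset_right hBA] at h

theorem IsMaxPSet.eq_of_subset {T U : Set V} (hT : IsMaxPSet P G T) (hTU : T ⊆ U)
    (hU : IsPSet P G U) : T = U := by
  by_contra hne
  exact hT.2 U (hTU.ssubset_of_ne hne) hU

theorem exists_isMaxPSet_superset {A : Set V} (hA : IsPSet P G A) :
    ∃ S, IsMaxPSet P G S ∧ A ⊆ S := by
  obtain ⟨S, ⟨hS, hAS⟩, hmax⟩ := Set.Finite.exists_maximalFor id {B | IsPSet P G B ∧ A ⊆ B}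
    (Set.toFinite _) ⟨A, hA, subset_rfl⟩
  refine ⟨S, ⟨hS, fun T hST hT => hST.ne ?_⟩, hAS⟩
  exact hST.subset.antisymm (hmax ⟨hT, hAS.trans hST.subset⟩ hST.subset)

theorem IsMaxPSet.eq_preimage_of_image_subset (hiso : P.IsoClosed) (hher : P.Hereditary)
    {W : Set V} {S : Set V} {T : Set W} (hT : IsMaxPSet P (G.induce W) T) (hS : IsPSet P G S)
    (hTS : Subtype.val '' T ⊆ S) : T = Subtype.val ⁻¹' S := by
  refine hT.eq_of_subset (Set.image_subset_iff.mp hTS) ((isPSet_induce_iff hiso W _).mpr ?_)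
  refine hS.mono hiso hher ?_
  rw [Subtype.image_preimage_coe]
  exact Set.inter_subset_right

end PSets

theorem maxPSets_of_induced_subgraph_general
    (P : GraphClass) (hiso : P.IsoClosed) (hher : P.Hereditary)
    {V : Type} [Fintype V] (G : SimpleGraph V) (W : Set V) :
    (∀ S : Set V, IsMaxPSet P G S →
      ∀ T₁ T₂ : Set (↥W), IsMaxPSet P (G.induce W) T₁ → IsMaxPSet P (G.induce W) T₂ →
        Subtype.val '' T₁ ⊆ S → Subtype.val '' T₂ ⊆ S → T₁ = T₂) ∧
    {T : Set (↥W) | IsMaxPSet P (G.induce W) T}.ncard ≤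
      {S : Set V | IsMaxPSet P G S}.ncard := by
  have unique : ∀ S : Set V, IsMaxPSet P G S →
      ∀ T₁ T₂ : Set W, IsMaxPSet P (G.induce W) T₁ → IsMaxPSet P (G.induce W) T₂ →
        Subtype.val '' T₁ ⊆ S → Subtype.val '' T₂ ⊆ S → T₁ = T₂ :=
    fun S hS T₁ T₂ h₁ h₂ hs₁ hs₂ =>
      (h₁.eq_preimage_of_image_subset hiso hher hS.1 hs₁).trans
        (h₂.eq_preimage_of_image_subset hiso hher hS.1 hs₂).symm
  refine ⟨unique, ?_⟩
  choose! extend hmax hsub using fun T (hT : IsMaxPSet P (G.induce W) T) =>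
    exists_isMaxPSet_superset ((isPSet_induce_iff hiso W T).mp hT.1)
  refine Set.ncard_le_ncard_of_injOn extend hmax fun T₁ h₁ T₂ h₂ heq => ?_
  exact unique _ (hmax T₁ h₁) T₁ T₂ h₁ h₂ (hsub T₁ h₁) (heq ▸ hsub T₂ h₂)

/-- Let `P` be a hereditary graph class, `G` a finite graph and `W ⊆ V(G)`.
(i) every maximal `P` set of `G` contains at most one maximal `P` set of `G[W]`, and
(ii) the number of maximal `P` sets of `G[W]` is at most the number of maximal `P` sets
of `G`. -/
theorem maxPSets_of_induced_subgraph
    (P : GraphClass) (hne : P.NonemptyClass) (hiso : P.IsoClosed) (hher : P.Hereditary)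
    {V : Type} [Fintype V] (G : SimpleGraph V) (W : Set V) :
    (∀ S : Set V, IsMaxPSet P G S →
      ∀ T₁ T₂ : Set (↥W), IsMaxPSet P (G.induce W) T₁ → IsMaxPSet P (G.induce W) T₂ →
        Subtype.val '' T₁ ⊆ S → Subtype.val '' T₂ ⊆ S → T₁ = T₂) ∧
    {T : Set (↥W) | IsMaxPSet P (G.induce W) T}.ncard ≤
      {S : Set V | IsMaxPSet P G S}.ncard :=
  maxPSets_of_induced_subgraph_general P hiso hher G W
end

section
/- Let P be a hereditary graph class that is closed under adding universal vertices, i.e., for every graph H in P, the graph obtained from H by adding a new vertex adjacent to all vertices of H is also in P. Let G be a finite graph and let G' be obtained from G by adding a new vertex u adjacent to all vertices of G. Then every maximal P set of G' contains u, and a set S ⊆ V(G) is a maximal P set of G if and only if S ∪ {u} is a maximal connected P set of G'. -/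
attribute [local instance] Classical.propDecidable

variable {V : Type} [Fintype V]

/-- The graph obtained from `G` by adding a new universal vertex (the vertex `none`),
adjacent to all vertices of `G`. -/
def addUniversal {V : Type} (G : SimpleGraph V) : SimpleGraph (Option V) :=
  SimpleGraph.fromRel (fun a b =>
    (∃ x y, a = some x ∧ b = some y ∧ G.Adj x y) ∨ (a = none ∧ ∃ y, b = some y))

/-- A graph class is closed under adding universal vertices if for every graph `H` in the
class, the graph obtained from `H` by adding a new vertex adjacent to all vertices of `H`
is also in the class. -/
def GraphClass.ClosedUnderUniversal (P : GraphClass) : Prop :=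
  ∀ (V : Type) (_ : Fintype V) (G : SimpleGraph V), P V G → P (Option V) (addUniversal G)


/-! The universal vertex `u` can be added to every `P` set of `G'`: remove `u`, read the rest as
a `P` set of `G` by heredity, and put `u` back, so maximal `P` sets of `G'` contain `u`. Every
vertex set containing `u` induces a connected subgraph of `G'`, so the connected `P` sets of `G'`
through `u` are exactly the sets `S ∪ {u}` with `S` a `P` set of `G`, and `S ↦ S ∪ {u}` preserves
strict inclusion. -/

open SimpleGraph Set

theorem GraphClass.Hereditary.of_embedding {P : GraphClass} (hher : P.Hereditary)
    (hiso : P.IsoClosed) {V W : Type} [Fintype V] [Fintype W] {G : SimpleGraph V}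
    {H : SimpleGraph W} (f : G ↪g H) (hH : P W H) : P V G :=
  (hiso _ _ _ _ _ _ ⟨f.isoInduceRange⟩).mpr (hher _ _ _ _ hH)

section addUniversal

variable {α β : Type} {G : SimpleGraph α} {H : SimpleGraph β}

@[simp]
theorem addUniversal_adj_some_some {x y : α} :
    (addUniversal G).Adj (some x) (some y) ↔ G.Adj x y := by
  simp only [addUniversal, fromRel_adj, ne_eq, Option.some.injEq, reduceCtorEq, false_and,
    exists_and_left, exists_eq_left', or_false]
  exact ⟨fun ⟨_, h⟩ => h.elim id G.adj_symm, fun h => ⟨h.ne, .inl h⟩⟩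

@[simp]
theorem addUniversal_adj_none_some (y : α) : (addUniversal G).Adj none (some y) :=
  ⟨by simp, .inl (.inr ⟨rfl, y, rfl⟩)⟩

@[simp]
theorem addUniversal_adj_some_none (x : α) : (addUniversal G).Adj (some x) none :=
  (addUniversal_adj_none_some x).symm

def SimpleGraph.Embedding.mapAddUniversal (f : G ↪g H) : addUniversal G ↪g addUniversal H where
  toFun := Option.map f
  inj' := Option.map_injective f.injective
  map_rel_iff' := by rintro (_ | x) (_ | y) <;> simp

def SimpleGraph.Embedding.toAddUniversal (G : SimpleGraph α) : G ↪g addUniversal G where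
  toFun := some
  inj' := Option.some_injective α
  map_rel_iff' := addUniversal_adj_some_some

def SimpleGraph.Embedding.inducePreimage (f : G ↪g H) (t : Set β) :
    G.induce (f ⁻¹' t) ↪g H.induce t where
  toFun := MapsTo.restrict f _ _ (mapsTo_preimage f t)
  inj' := (MapsTo.restrict_inj _).2 f.injective.injOn
  map_rel_iff' := by simp

theorem range_optionMap_subtype_val (S : Set α) :
    range (Option.map ((↑) : S → α)) = insert none (some '' S) := by
  rw [Option.range_eq, Option.map_none, Option.map_comp_some, range_comp, Subtype.range_coe]

theorem insert_none_image_preimage_some (T : Set (Option α)) :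
    insert none (some '' (some ⁻¹' T)) = insert none T := by
  ext (_ | x) <;> simp

theorem insert_none_image_ssubset_iff {S T : Set α} :
    insert none (some '' S) ⊂ insert none (some '' T) ↔ S ⊂ T := by
  have subset_iff (S T : Set α) : insert none (some '' S) ⊆ insert none (some '' T) ↔ S ⊆ T :=
    (insert_subset_insert_iff (by simp)).trans (image_subset_image_iff (Option.some_injective α))
  simp only [ssubset_iff_subset_not_subset, subset_iff]

theorem connected_induce_addUniversal_of_none_mem {T : Set (Option α)} (hT : none ∈ T) :
    ((addUniversal G).induce T).Connected := by
  have reach_none : ∀ v : T, ((addUniversal G).induce T).Reachable ⟨none, hT⟩ v := by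
    rintro ⟨_ | x, hx⟩
    · rfl
    · exact Adj.reachable (addUniversal_adj_none_some x)
  exact (connected_iff_exists_forall_reachable _).2 ⟨_, reach_none⟩

end addUniversal

section PSet

variable {P : GraphClass} {G : SimpleGraph V}

theorem IsPSet.preimage_some (hher : P.Hereditary) (hiso : P.IsoClosed) {T : Set (Option V)}
    (hT : IsPSet P (addUniversal G) T) : IsPSet P G (some ⁻¹' T) :=
  hher.of_embedding hiso ((Embedding.toAddUniversal G).inducePreimage T) hT

theorem IsPSet.insert_none_image (hiso : P.IsoClosed) (huniv : P.ClosedUnderUniversal)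
    {S : Set V} (hS : IsPSet P G S) : IsPSet P (addUniversal G) (insert none (some '' S)) := by
  rw [← range_optionMap_subtype_val]
  exact (hiso _ _ _ _ _ _ ⟨(Embedding.induce S).mapAddUniversal.isoInduceRange⟩).mp
    (huniv _ _ _ hS)

theorem IsPSet.insert_none (hher : P.Hereditary) (hiso : P.IsoClosed)
    (huniv : P.ClosedUnderUniversal) {T : Set (Option V)} (hT : IsPSet P (addUniversal G) T) :
    IsPSet P (addUniversal G) (insert none T) := by
  rw [← insert_none_image_preimage_some]
  exact (hT.preimage_some hher hiso).insert_none_image hiso huniv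

theorem IsMaxPSet.none_mem (hher : P.Hereditary) (hiso : P.IsoClosed)
    (huniv : P.ClosedUnderUniversal) {T : Set (Option V)}
    (hT : IsMaxPSet P (addUniversal G) T) : none ∈ T := by
  by_contra h
  exact hT.2 _ (ssubset_insert h) (hT.1.insert_none hher hiso huniv)

theorem isConnPSet_insert_none_image_iff (hher : P.Hereditary) (hiso : P.IsoClosed)
    (huniv : P.ClosedUnderUniversal) {S : Set V} :
    IsConnPSet P (addUniversal G) (insert none (some '' S)) ↔ IsPSet P G S := by
  refine ⟨fun h => ?_, fun h => ⟨h.insert_none_image hiso huniv,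
    connected_induce_addUniversal_of_none_mem (mem_insert _ _)⟩⟩
  have preimage_eq : some ⁻¹' insert none (some '' S) = S := by ext; simp
  simpa only [preimage_eq] using h.1.preimage_some hher hiso

theorem isMaxPSet_iff_isMaxConnPSet_insert_none_image (hher : P.Hereditary)
    (hiso : P.IsoClosed) (huniv : P.ClosedUnderUniversal) {S : Set V} :
    IsMaxPSet P G S ↔ IsMaxConnPSet P (addUniversal G) (insert none (some '' S)) := by
  have conn_iff (T : Set V) := isConnPSet_insert_none_image_iff hher hiso huniv (G := G) (S := T)
  refine and_congr (conn_iff S).symm ⟨fun hmax T hST hT => ?_, fun hmax T hST hT => ?_⟩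
  · have hT_eq : insert none (some '' (some ⁻¹' T)) = T := by
      rw [insert_none_image_preimage_some, insert_eq_of_mem (hST.subset (mem_insert _ _))]
    rw [← hT_eq] at hST hT
    exact hmax _ (insert_none_image_ssubset_iff.1 hST) ((conn_iff _).1 hT)
  · exact hmax _ (insert_none_image_ssubset_iff.2 hST) ((conn_iff _).2 hT)

end PSet

theorem maxPSet_iff_maxConnPSet_addUniversal_general
    (P : GraphClass) (hiso : P.IsoClosed) (hher : P.Hereditary)
    (huniv : P.ClosedUnderUniversal)
    {V : Type} [Fintype V] (G : SimpleGraph V) :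
    (∀ S : Set (Option V), IsMaxPSet P (addUniversal G) S → none ∈ S) ∧
    (∀ S : Set V,
      IsMaxPSet P G S ↔
        IsMaxConnPSet P (addUniversal G) (insert none (some '' S))) :=
  ⟨fun _ hS => hS.none_mem hher hiso huniv,
    fun _ => isMaxPSet_iff_isMaxConnPSet_insert_none_image hher hiso huniv⟩

/-- Let `P` be a hereditary graph class closed under adding universal
vertices, `G` a finite graph and `G'` the graph obtained from `G` by adding a new
universal vertex `u` (here `u = none`).  Then every maximal `P` set of `G'` contains
`u`, and `S ⊆ V(G)` is a maximal `P` set of `G` if and only if `S ∪ {u}` is a maximal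
connected `P` set of `G'`. -/
theorem maxPSet_iff_maxConnPSet_addUniversal
    (P : GraphClass) (hne : P.NonemptyClass) (hiso : P.IsoClosed) (hher : P.Hereditary)
    (huniv : P.ClosedUnderUniversal)
    {V : Type} [Fintype V] (G : SimpleGraph V) :
    (∀ S : Set (Option V), IsMaxPSet P (addUniversal G) S → none ∈ S) ∧
    (∀ S : Set V,
      IsMaxPSet P G S ↔
        IsMaxConnPSet P (addUniversal G) (insert none (some '' S))) :=
  maxPSet_iff_maxConnPSet_addUniversal_general P hiso hher huniv G
end

section
/- Let P be a hereditary graph class, let G be a finite graph on n vertices, and let Z be a nonempty set of vertices of G such that every forbidden set of G contains Z as a subset. Then at most |Z| maximal P sets of G do not contain Z as a subset, and at most |Z|·n maximal connected P sets of G do not contain Z as a subset. -/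
attribute [local instance] Classical.propDecidable

variable {V : Type} [Fintype V]

/-! By finiteness, every vertex set that is not a `P` set contains a forbidden set, hence `Z`; so every
set missing a vertex of `Z` is a `P` set. Consequently a maximal `P` set missing `z ∈ Z` is
`V ∖ {z}`, and two maximal connected `P` sets that both miss `z ∈ Z` and share a vertex `s` have
a connected `P` union, so they coincide. Charging each set to such a `z`, resp. such a pair
`(z, s)`, gives the two bounds. -/

theorem Set.ncard_le_ncard_of_forall_subsingleton {α β : Type*} {s : Set α} {t : Set β}
    (ht : t.Finite) (r : α → β → Prop) (hs : ∀ a ∈ s, ∃ b ∈ t, r a b)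
    (hr : ∀ b ∈ t, {a ∈ s | r a b}.Subsingleton) : s.ncard ≤ t.ncard := by
  by_cases hsf : s.Finite
  · rw [ncard_eq_toFinset_card s hsf, ncard_eq_toFinset_card t ht]
    exact Finset.card_le_card_of_forall_subsingleton r (by simpa using hs) (by simpa using hr)
  · simp [Set.Infinite.ncard hsf]

section

variable {P : GraphClass} {G : SimpleGraph V} {Z : Set V}

theorem exists_isForbiddenSet_subset {T : Set V} (hT : ¬ IsPSet P G T) :
    ∃ X ⊆ T, IsForbiddenSet P G X := by
  obtain ⟨X, hXT, hX, hXmin⟩ :=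
    exists_minimal_le_of_wellFoundedLT (fun X => ¬ IsPSet P G X) T hT
  exact ⟨X, hXT, hX, fun Y hYX => by_contra fun hY => hYX.not_ge (hXmin hY hYX.le)⟩

theorem isPSet_of_not_subset (hZ : ∀ X : Set V, IsForbiddenSet P G X → Z ⊆ X) {T : Set V}
    (hT : ¬ Z ⊆ T) : IsPSet P G T := by
  by_contra hPT
  obtain ⟨X, hXT, hX⟩ := exists_isForbiddenSet_subset hPT
  exact hT ((hZ X hX).trans hXT)

theorem IsMaxPSet.eq_compl_singleton (hZ : ∀ X : Set V, IsForbiddenSet P G X → Z ⊆ X)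
    {S : Set V} (hS : IsMaxPSet P G S) {z : V} (hz : z ∈ Z) (hzS : z ∉ S) : S = {z}ᶜ := by
  have hsub : S ⊆ {z}ᶜ := Set.subset_compl_singleton_iff.mpr hzS
  refine hsub.eq_of_not_ssubset fun hlt => hS.2 _ hlt (isPSet_of_not_subset hZ ?_)
  exact fun h => h hz rfl

theorem IsMaxConnPSet.eq_of_mem_of_notMem (hZ : ∀ X : Set V, IsForbiddenSet P G X → Z ⊆ X)
    {S₁ S₂ : Set V} (h₁ : IsMaxConnPSet P G S₁) (h₂ : IsMaxConnPSet P G S₂) {z s : V}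
    (hz : z ∈ Z) (hz₁ : z ∉ S₁) (hz₂ : z ∉ S₂) (hs₁ : s ∈ S₁) (hs₂ : s ∈ S₂) : S₁ = S₂ := by
  have hunion : IsConnPSet P G (S₁ ∪ S₂) :=
    ⟨isPSet_of_not_subset hZ fun h => (h hz).elim hz₁ hz₂,
      SimpleGraph.induce_union_connected h₁.1.2.preconnected h₂.1.2.preconnected ⟨s, hs₁, hs₂⟩⟩
  have e₁ : S₁ = S₁ ∪ S₂ :=
    Set.subset_union_left.eq_of_not_ssubset fun hlt => h₁.2 _ hlt hunion
  have e₂ : S₂ = S₁ ∪ S₂ :=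
    Set.subset_union_right.eq_of_not_ssubset fun hlt => h₂.2 _ hlt hunion
  exact e₁.trans e₂.symm

end

theorem card_maxPSets_not_containing_Z_general
    (P : GraphClass)
    {V : Type} [Fintype V] (G : SimpleGraph V) (Z : Set V)
    (hZ : ∀ X : Set V, IsForbiddenSet P G X → Z ⊆ X) :
    {S : Set V | IsMaxPSet P G S ∧ ¬ Z ⊆ S}.ncard ≤ Z.ncard ∧
    {S : Set V | IsMaxConnPSet P G S ∧ ¬ Z ⊆ S}.ncard ≤ Z.ncard * Fintype.card V := by
  constructor
  · refine Set.ncard_le_ncard_of_forall_subsingleton Z.toFinite (fun S z => z ∉ S)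
      (fun S hS => Set.not_subset.mp hS.2) fun z hz S₁ h₁ S₂ h₂ => ?_
    rw [h₁.1.1.eq_compl_singleton hZ hz h₁.2, h₂.1.1.eq_compl_singleton hZ hz h₂.2]
  · calc _ ≤ (Z ×ˢ Set.univ : Set (V × V)).ncard := by
          refine Set.ncard_le_ncard_of_forall_subsingleton (Set.toFinite _)
            (fun S p => p.1 ∉ S ∧ p.2 ∈ S) (fun S hS => ?_) fun p hp S₁ h₁ S₂ h₂ =>
              h₁.1.1.eq_of_mem_of_notMem hZ h₂.1.1 hp.1 h₁.2.1 h₂.2.1 h₁.2.2 h₂.2.2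
          obtain ⟨z, hz, hzS⟩ := Set.not_subset.mp hS.2
          obtain ⟨⟨s, hs⟩⟩ := hS.1.1.2.nonempty
          exact ⟨(z, s), ⟨hz, Set.mem_univ s⟩, hzS, hs⟩
      _ = Z.ncard * Fintype.card V := by
          rw [Set.ncard_prod, Set.ncard_univ, Nat.card_eq_fintype_card]

/-- Let `P` be a hereditary graph class, `G` a finite graph on `n`
vertices, and `Z` a nonempty set of vertices such that every forbidden set of `G`
contains `Z`.  Then at most `|Z|` maximal `P` sets of `G` do not contain `Z`, and at
most `|Z| * n` maximal connected `P` sets of `G` do not contain `Z`. -/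
theorem card_maxPSets_not_containing_Z
    (P : GraphClass) (hne : P.NonemptyClass) (hiso : P.IsoClosed) (hher : P.Hereditary)
    {V : Type} [Fintype V] (G : SimpleGraph V) (Z : Set V) (hZne : Z.Nonempty)
    (hZ : ∀ X : Set V, IsForbiddenSet P G X → Z ⊆ X) :
    {S : Set V | IsMaxPSet P G S ∧ ¬ Z ⊆ S}.ncard ≤ Z.ncard ∧
    {S : Set V | IsMaxConnPSet P G S ∧ ¬ Z ⊆ S}.ncard ≤ Z.ncard * Fintype.card V :=
  card_maxPSets_not_containing_Z_general P G Z hZ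
end

section
/- Let G be a finite graph and v a vertex of G. Then v lies on some hole of G if and only if there exist two nonadjacent vertices u, w in the neighborhood N(v) of v and a path from u to w in G all of whose internal vertices lie outside the closed neighborhood N[v] = N(v) ∪ {v}. -/
/-- A hole of a graph `G`: the vertex set of an induced cycle of `G` on at least four
vertices. -/
def IsHole {V : Type} (G : SimpleGraph V) (X : Set V) : Prop :=
  ∃ n : ℕ, 4 ≤ n ∧ Nonempty (G.induce X ≃g SimpleGraph.cycleGraph n)

/-!
On a hole through `v`, the two cycle neighbours `u, w` of `v` are nonadjacent because the cycle
has length at least four, and the rest of the cycle is a `u`–`w` path whose interior misses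
`N[v]` because the cycle is induced. Conversely, a shortest `u`–`w` path with interior outside
`N[v]` has no chords, since a chord would give a shorter such path; closing it up through `v`
gives an induced cycle of length at least four.
-/

theorem Fin.val_sub_eq_ite {m : ℕ} (x y : Fin m) :
    ((x - y : Fin m) : ℕ) = if y ≤ x then (x : ℕ) - y else m + x - y := by
  split_ifs with h
  · exact Fin.coe_sub_iff_le.2 h
  · exact Fin.coe_sub_iff_lt.2 (not_le.1 h)

namespace SimpleGraph

variable {V W : Type*} {G : SimpleGraph V} {H : SimpleGraph W}

theorem cycleGraph_adj_zero_succ {n : ℕ} {k : Fin (n + 1)} :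
    (cycleGraph (n + 2)).Adj 0 k.succ ↔ k = 0 ∨ k = Fin.last n := by
  rw [cycleGraph_adj', Fin.val_sub_eq_ite, Fin.val_sub_eq_ite]
  simp only [Fin.le_def, Fin.ext_iff, Fin.val_succ, Fin.val_zero, Fin.val_last]
  split_ifs <;> omega

theorem cycleGraph_adj_succ_succ {n : ℕ} {a b : Fin (n + 1)} :
    (cycleGraph (n + 2)).Adj a.succ b.succ ↔ (pathGraph (n + 1)).Adj a b := by
  rw [cycleGraph_adj', pathGraph_adj, Fin.val_sub_eq_ite, Fin.val_sub_eq_ite]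
  simp only [Fin.le_def, Fin.val_succ]
  have := a.isLt
  have := b.isLt
  split_ifs <;> omega

def cycleGraph.addLeft {n : ℕ} (i : Fin (n + 2)) :
    cycleGraph (n + 2) ≃g cycleGraph (n + 2) where
  toEquiv := Equiv.addLeft i
  map_rel_iff' := by simp [cycleGraph_adj]

def Walk.InternallyAvoids {u w : V} (p : G.Walk u w) (S : Set V) : Prop :=
  ∀ x ∈ p.support, x ≠ u → x ≠ w → x ∉ S

theorem Walk.InternallyAvoids.mono {u w : V} {p q : G.Walk u w} {S : Set V}
    (hp : p.InternallyAvoids S) (hqp : q.support ⊆ p.support) : q.InternallyAvoids S :=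
  fun x hx => hp x (hqp hx)

def HasNonadjNbrsLinkedOutsideClosedNbhd (G : SimpleGraph V) (v : V) : Prop :=
  ∃ u w : V, u ∈ G.neighborSet v ∧ w ∈ G.neighborSet v ∧ u ≠ w ∧ ¬ G.Adj u w ∧
    ∃ p : G.Walk u w, p.IsPath ∧ p.InternallyAvoids (insert v (G.neighborSet v))

theorem HasNonadjNbrsLinkedOutsideClosedNbhd.map (φ : H ↪g G) {a : W}
    (h : H.HasNonadjNbrsLinkedOutsideClosedNbhd a) :
    G.HasNonadjNbrsLinkedOutsideClosedNbhd (φ a) := by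
  obtain ⟨u, w, hu, hw, huw, hnadj, p, hp, hpa⟩ := h
  refine ⟨φ u, φ w, φ.apply_mem_neighborSet_iff.2 hu, φ.apply_mem_neighborSet_iff.2 hw,
    φ.injective.ne huw, by rwa [φ.map_adj_iff], p.map φ.toHom, hp.map φ.injective, ?_⟩
  intro x hx hxu hxw
  obtain ⟨y, hy, rfl⟩ := List.mem_map.1 (Walk.support_map _ _ ▸ hx)
  have := hpa y hy (fun h => hxu (h ▸ rfl)) (fun h => hxw (h ▸ rfl))
  simpa [φ.injective.eq_iff, φ.apply_mem_neighborSet_iff] using this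

theorem cycleGraph_hasNonadjNbrsLinkedOutsideClosedNbhd_zero (n : ℕ) :
    (cycleGraph (n + 4)).HasNonadjNbrsLinkedOutsideClosedNbhd 0 := by
  classical
  obtain ⟨p⟩ := (pathGraph_connected (n + 2)).preconnected 0 (Fin.last (n + 2))
  let succ : pathGraph (n + 3) ↪g cycleGraph (n + 4) :=
    ⟨Fin.succEmb _, cycleGraph_adj_succ_succ⟩
  refine ⟨succ 0, succ (Fin.last _), cycleGraph_adj_zero_succ.2 (.inl rfl),
    cycleGraph_adj_zero_succ.2 (.inr rfl), succ.injective.ne (Fin.last_pos.ne),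
    by rw [succ.map_adj_iff, pathGraph_adj]; simp, p.bypass.map succ.toHom,
    p.bypass_isPath.map succ.injective, ?_⟩
  intro x hx hxu hxw
  obtain ⟨j, -, rfl⟩ := List.mem_map.1 (Walk.support_map _ _ ▸ hx)
  have hj0 : j ≠ 0 := fun h => hxu (h ▸ rfl)
  have hjl : j ≠ Fin.last _ := fun h => hxw (h ▸ rfl)
  simp [succ, cycleGraph_adj_zero_succ, hj0, hjl, Fin.succ_ne_zero]

theorem cycleGraph_hasNonadjNbrsLinkedOutsideClosedNbhd {n : ℕ} (i : Fin (n + 4)) :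
    (cycleGraph (n + 4)).HasNonadjNbrsLinkedOutsideClosedNbhd i := by
  simpa [cycleGraph.addLeft] using
    (cycleGraph_hasNonadjNbrsLinkedOutsideClosedNbhd_zero n).map (cycleGraph.addLeft i).toEmbedding

theorem Walk.not_adj_getVert_of_forall_length_le {u w : V} {S : Set V}
    {q : G.Walk u w} (hq : q.InternallyAvoids S)
    (hmin : ∀ p : G.Walk u w, p.IsPath → p.InternallyAvoids S → q.length ≤ p.length)
    {a b : ℕ} (hab : a + 1 < b) (hb : b ≤ q.length) :
    ¬ G.Adj (q.getVert a) (q.getVert b) := by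
  classical
  intro hadj
  let shortcut := (q.take a).append (cons hadj (q.drop b))
  have hsub : shortcut.support ⊆ q.support := by
    intro x hx
    simp only [shortcut, support_append, support_cons, List.tail_cons, List.mem_append] at hx
    exact hx.elim (fun h => (q.isSubwalk_take a).support_subset h)
      (fun h => (q.isSubwalk_drop b).support_subset h)
  have hlen : shortcut.length < q.length := by
    simp only [shortcut, length_append, length_cons, take_length, drop_length]
    omega
  have := hmin _ shortcut.bypass_isPath
    (hq.mono (List.Subset.trans (support_bypass_subset_support _) hsub))
  have := shortcut.length_bypass_le_length
  omega

def Walk.IsPath.pathGraphEmbedding {u w : V} {q : G.Walk u w} (hq : q.IsPath)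
    (hchord : ∀ a b, a + 1 < b → b ≤ q.length → ¬ G.Adj (q.getVert a) (q.getVert b)) :
    pathGraph (q.length + 1) ↪g G where
  toFun k := q.getVert k
  inj' a b h :=
    Fin.ext (hq.getVert_injOn (Nat.lt_succ_iff.1 a.isLt) (Nat.lt_succ_iff.1 b.isLt) h)
  map_rel_iff' {a b} := by
    change G.Adj (q.getVert a) (q.getVert b) ↔ _
    have ha := a.isLt
    have hb := b.isLt
    rw [pathGraph_adj]
    refine ⟨fun hadj => ?_, ?_⟩
    · by_contra hne
      rcases lt_trichotomy (a : ℕ) b with h | h | h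
      · exact hchord a b (by omega) (by omega) hadj
      · exact G.irrefl (h ▸ hadj)
      · exact hchord b a (by omega) (by omega) hadj.symm
    · rintro (h | h)
      · exact h ▸ q.adj_getVert_succ (by omega)
      · exact h ▸ (q.adj_getVert_succ (by omega)).symm

def Embedding.cycleGraphCons {n : ℕ} (ψ : pathGraph (n + 1) ↪g G) (v : V)
    (hvψ : v ∉ Set.range ψ) (hv : ∀ k, G.Adj v (ψ k) ↔ k = 0 ∨ k = Fin.last n) :
    cycleGraph (n + 2) ↪g G where
  toFun := Fin.cons v ψ
  inj' := Fin.cons_injective_iff.2 ⟨hvψ, ψ.injective⟩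
  map_rel_iff' {a b} := by
    cases a using Fin.cases <;> cases b using Fin.cases
    · simp
    · simp [hv, cycleGraph_adj_zero_succ]
    · simp [G.adj_comm _ v, (cycleGraph _).adj_comm _ 0, hv, cycleGraph_adj_zero_succ]
    · simp [cycleGraph_adj_succ_succ]

theorem HasNonadjNbrsLinkedOutsideClosedNbhd.exists_cycleGraph_embedding {v : V}
    (h : G.HasNonadjNbrsLinkedOutsideClosedNbhd v) :
    ∃ n, 4 ≤ n ∧ ∃ φ : cycleGraph n ↪g G, v ∈ Set.range φ := by
  classical
  obtain ⟨u, w, hu, hw, huw, hnadj, p, hp, hpS⟩ := h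
  set S := insert v (G.neighborSet v)
  obtain ⟨q, ⟨hq, hqS⟩, hmin⟩ := (measure fun q : G.Walk u w => q.length).wf.has_min
    {q | q.IsPath ∧ q.InternallyAvoids S} ⟨p, hp, hpS⟩
  have hchord a b (hab : a + 1 < b) (hb : b ≤ q.length) :
      ¬ G.Adj (q.getVert a) (q.getVert b) :=
    q.not_adj_getVert_of_forall_length_le hqS (fun p hp hpS => not_lt.1 (hmin p ⟨hp, hpS⟩))
      hab hb
  have hvq : v ∉ q.support := fun hv =>
    hqS v hv (G.ne_of_adj hu) (G.ne_of_adj hw) (Set.mem_insert _ _)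
  have hv (k : Fin (q.length + 1)) : G.Adj v (q.getVert k) ↔ k = 0 ∨ k = Fin.last _ := by
    refine ⟨fun hadj => ?_, ?_⟩
    · by_contra hk
      simp only [not_or, Fin.ext_iff, Fin.val_zero, Fin.val_last] at hk
      have hk' : (k : ℕ) ≤ q.length := Nat.lt_succ_iff.1 k.isLt
      exact hqS _ (q.getVert_mem_support k) (mt (hq.getVert_eq_start_iff hk').1 hk.1)
        (mt (hq.getVert_eq_end_iff hk').1 hk.2) (Set.mem_insert_of_mem _ hadj)
    · rintro (rfl | rfl)
      · simpa using hu
      · simpa using hw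
  have hlen : 2 ≤ q.length := by
    have h0 : q.length ≠ 0 := fun h => huw (Walk.eq_of_length_eq_zero h)
    have h1 : q.length ≠ 1 := fun h => hnadj (Walk.adj_of_length_eq_one h)
    omega
  refine ⟨q.length + 2, by omega, (hq.pathGraphEmbedding hchord).cycleGraphCons v ?_ hv, 0, rfl⟩
  rintro ⟨k, hk⟩
  exact hvq (hk ▸ q.getVert_mem_support k)

end SimpleGraph

theorem mem_hole_iff_path_outside_closed_nbhd_general
    {V : Type} (G : SimpleGraph V) (v : V) :
    (∃ X : Set V, IsHole G X ∧ v ∈ X) ↔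
      ∃ u w : V, u ∈ G.neighborSet v ∧ w ∈ G.neighborSet v ∧ u ≠ w ∧ ¬ G.Adj u w ∧
        ∃ p : G.Walk u w, p.IsPath ∧
          ∀ x ∈ p.support, x ≠ u → x ≠ w → x ∉ insert v (G.neighborSet v) := by
  change _ ↔ G.HasNonadjNbrsLinkedOutsideClosedNbhd v
  constructor
  · rintro ⟨X, ⟨n, hn, ⟨e⟩⟩, hv⟩
    obtain ⟨m, rfl⟩ := Nat.exists_eq_add_of_le' hn
    let φ := (SimpleGraph.Embedding.induce X).comp e.symm.toEmbedding
    have hcycle := SimpleGraph.cycleGraph_hasNonadjNbrsLinkedOutsideClosedNbhd (e ⟨v, hv⟩)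
    simpa [φ] using hcycle.map φ
  · intro h
    obtain ⟨n, hn, φ, hv⟩ := h.exists_cycleGraph_embedding
    exact ⟨Set.range φ, ⟨n, hn, ⟨φ.isoInduceRange.symm⟩⟩, hv⟩

/-- A vertex `v` of a finite graph `G` lies on some hole of `G` if and
only if there are two distinct nonadjacent vertices `u, w ∈ N(v)` and a path from `u` to
`w` in `G` all of whose internal vertices lie outside the closed neighborhood
`N[v] = N(v) ∪ {v}`. -/
theorem mem_hole_iff_path_outside_closed_nbhd
    {V : Type} [Fintype V] (G : SimpleGraph V) (v : V) :
    (∃ X : Set V, IsHole G X ∧ v ∈ X) ↔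
      ∃ u w : V, u ∈ G.neighborSet v ∧ w ∈ G.neighborSet v ∧ u ≠ w ∧ ¬ G.Adj u w ∧
        ∃ p : G.Walk u w, p.IsPath ∧
          ∀ x ∈ p.support, x ≠ u → x ≠ w → x ∉ insert v (G.neighborSet v) :=
  mem_hole_iff_path_outside_closed_nbhd_general G v
end

section
/- Let G be a finite interval graph with clique path K_1, …, K_ℓ. Suppose G has another clique path in which K_ℓ is not one of the two ends; let K_p be the end of this second clique path that lies, within the second clique path, on the opposite side of K_ℓ from K_1 (i.e., the end that becomes disconnected from K_1 when K_ℓ is removed from the second clique path), and let J be the set of indices j such that K_j lies strictly between K_ℓ and K_p in the second clique path. Then the set U = (⋃_{j ∈ {p, p+1, …, ℓ} ∪ J} K_j) \ (K_p ∩ K_ℓ) is a nontrivial module of G; in fact, every vertex v ∈ U satisfies N(v) \ U = K_p ∩ K_ℓ. -/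
/-- `C` is a maximal clique of `G`. -/
def IsMaximalClique {V : Type} (G : SimpleGraph V) (C : Set V) : Prop :=
  G.IsClique C ∧ ∀ D : Set V, G.IsClique D → C ⊆ D → D = C

/-- A clique path of `G`: a linear ordering `K 0, …, K (last)` of all the maximal cliques
of `G` (each maximal clique occurring exactly once) such that for every vertex `v`, the
maximal cliques containing `v` occur consecutively. -/
def IsCliquePath {V : Type} (G : SimpleGraph V) {m : ℕ} (K : Fin m → Set V) : Prop :=
  Function.Injective K ∧
  (∀ i : Fin m, IsMaximalClique G (K i)) ∧
  (∀ C : Set V, IsMaximalClique G C → ∃ i : Fin m, K i = C) ∧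
  (∀ (v : V) (i j k : Fin m), i ≤ j → j ≤ k → v ∈ K i → v ∈ K k → v ∈ K j)

/-- `U` is a module of `G`: all vertices of `U` have exactly the same neighbors outside
`U`. -/
def IsModule {V : Type} (G : SimpleGraph V) (U : Set V) : Prop :=
  ∀ u ∈ U, ∀ w ∈ U, ∀ x : V, x ∉ U → (G.Adj x u ↔ G.Adj x w)

/-!
Write `P = K p ∩ K ℓ` and `R = {p, …, ℓ} ∪ J`, so that `U = (⋃_{j ∈ R} K j) \ P`.
Every clique `K j` with `j ∈ R` contains `P`: for `j ≥ p` by consecutiveness in the first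
path, for `j ∈ J` by consecutiveness in the second one. Conversely, a clique `K i` with
`i ∉ R` sits in the second path beyond `K ℓ` as seen from the end `K p`, so a vertex shared
by `K i` and some `K j`, `j ∈ R`, lies in `K ℓ` (second path) and hence in `K p` (first
path). Since every edge of `G` lies in some maximal clique, the neighbours of `v ∈ U`
outside `U` are exactly the vertices of `P`. Two distinct maximal cliques `K p`, `K ℓ` give
two vertices of `U`, and the vertices of `K 0`, which lies beyond `K ℓ` as well, are not
in `U`.
-/

open Set

namespace Set

variable {α : Type*} [LinearOrder α] {a b c e x : α}

theorem mem_uIoo_iff : x ∈ uIoo a b ↔ (a < x ∧ x < b) ∨ (b < x ∧ x < a) := by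
  rw [uIoo_eq_union]
  rfl

theorem mem_uIoo_of_mem_uIcc (h : x ∈ uIcc a b) (ha : x ≠ a) (hb : x ≠ b) : x ∈ uIoo a b := by
  rw [mem_uIoo_iff]
  rcases mem_uIcc.1 h with ⟨h₁, h₂⟩ | ⟨h₁, h₂⟩
  · exact Or.inl ⟨lt_of_le_of_ne h₁ ha.symm, lt_of_le_of_ne h₂ hb⟩
  · exact Or.inr ⟨lt_of_le_of_ne h₁ hb.symm, lt_of_le_of_ne h₂ ha⟩

theorem mem_uIcc_or_mem_uIcc_of_isTop_or_isBot (he : IsTop e ∨ IsBot e) :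
    a ∈ uIcc b e ∨ b ∈ uIcc a e := by
  rcases he with he | he <;> rcases le_total a b with h | h
  exacts [Or.inr (mem_uIcc_of_le h (he b)), Or.inl (mem_uIcc_of_le h (he a)),
    Or.inl (mem_uIcc_of_ge (he a) h), Or.inr (mem_uIcc_of_ge (he b) h)]

theorem mem_uIcc_of_mem_uIcc_of_mem_uIcc (hb : b ∈ uIcc a e) (hc : c ∈ uIcc b e) :
    b ∈ uIcc a c := by
  rw [mem_uIcc] at *
  rcases hb with ⟨h₁, h₂⟩ | ⟨h₁, h₂⟩ <;> rcases hc with ⟨h₃, h₄⟩ | ⟨h₃, h₄⟩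
  exacts [Or.inl ⟨h₁, h₃⟩, Or.inl ⟨h₁, h₂.trans h₃⟩, Or.inr ⟨h₄.trans h₁, h₂⟩, Or.inr ⟨h₄, h₂⟩]

end Set

section MaximalClique

variable {V : Type} {G : SimpleGraph V} {C D S : Set V}

theorem isMaximalClique_iff_maximal : IsMaximalClique G C ↔ Maximal G.IsClique C :=
  and_congr_right fun _ => forall_congr' fun _ => imp_congr_right fun _ =>
    ⟨fun h hCD => (h hCD).le, fun h hCD => (h hCD).antisymm hCD⟩

theorem exists_isMaximalClique_superset (hC : G.IsClique C) :
    ∃ D, IsMaximalClique G D ∧ C ⊆ D := by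
  obtain ⟨D, hCD, hD⟩ := zorn_subset_nonempty {D | G.IsClique D}
    (fun c hc hchain _ => ⟨⋃₀ c, (SimpleGraph.isClique_sUnion hchain.directedOn).2 hc,
      fun _ => subset_sUnion_of_mem⟩) C hC
  exact ⟨D, isMaximalClique_iff_maximal.2 hD, hCD⟩

theorem IsMaximalClique.not_subset (hC : IsMaximalClique G C) (hD : G.IsClique D)
    (hne : D ≠ C) : ¬C ⊆ D :=
  fun hCD => hne (hC.2 D hD hCD)

theorem IsMaximalClique.nonempty (hC : IsMaximalClique G C) (hD : G.IsClique D)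
    (hne : D ≠ C) : C.Nonempty :=
  nonempty_iff_ne_empty.2 fun h => hC.not_subset hD hne (h ▸ empty_subset D)

theorem IsMaximalClique.two_le_ncard_diff_inter [Finite V] (hC : IsMaximalClique G C)
    (hD : IsMaximalClique G D) (hne : C ≠ D) (hCS : C ⊆ S) (hDS : D ⊆ S) :
    2 ≤ (S \ (C ∩ D)).ncard := by
  obtain ⟨a, haC, haD⟩ := Set.not_subset.1 (hC.not_subset hD.1 hne.symm)
  obtain ⟨b, hbD, hbC⟩ := Set.not_subset.1 (hD.not_subset hC.1 hne)
  exact (one_lt_ncard_iff (toFinite _)).2 ⟨a, b, ⟨hCS haC, fun h => haD h.2⟩,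
    ⟨hDS hbD, fun h => hbC h.1⟩, ne_of_mem_of_not_mem haC hbC⟩

end MaximalClique

theorem isModule_of_neighborSet_diff_eq {V : Type} {G : SimpleGraph V} {U S : Set V}
    (h : ∀ v ∈ U, G.neighborSet v \ U = S) : IsModule G U := by
  intro u hu w hw x hx
  have hadj : ∀ v ∈ U, (G.Adj x v ↔ x ∈ S) := fun v hv => by
    rw [← h v hv, mem_sdiff, SimpleGraph.mem_neighborSet, G.adj_comm]
    exact (and_iff_left hx).symm
  rw [hadj u hu, hadj w hw]

section CliqueCover

variable {V ι : Type*} {G : SimpleGraph V} {C : ι → Set V} {R : Set ι} {P : Set V}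

theorem notMem_biUnion_diff_of_mem (hsep : ∀ i ∉ R, ∀ j ∈ R, C i ∩ C j ⊆ P) {i : ι}
    (hi : i ∉ R) {v : V} (hv : v ∈ C i) : v ∉ (⋃ j ∈ R, C j) \ P := by
  rintro ⟨hvR, hvP⟩
  obtain ⟨j, hj, hvj⟩ := mem_iUnion₂.1 hvR
  exact hvP (hsep i hi j hj ⟨hv, hvj⟩)

theorem neighborSet_diff_biUnion_diff_eq (hC : ∀ i, G.IsClique (C i))
    (hcover : ∀ ⦃u v⦄, G.Adj u v → ∃ i, u ∈ C i ∧ v ∈ C i) (hPR : ∀ j ∈ R, P ⊆ C j)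
    (hsep : ∀ i ∉ R, ∀ j ∈ R, C i ∩ C j ⊆ P) {v : V} (hv : v ∈ (⋃ j ∈ R, C j) \ P) :
    G.neighborSet v \ ((⋃ j ∈ R, C j) \ P) = P := by
  obtain ⟨j, hj, hvj⟩ := mem_iUnion₂.1 hv.1
  ext x
  refine ⟨fun ⟨hvx, hxU⟩ => ?_, fun hxP => ⟨?_, fun hxU => hxU.2 hxP⟩⟩
  · by_contra hxP
    obtain ⟨i, hvi, hxi⟩ := hcover hvx
    by_cases hi : i ∈ R
    · exact hxU ⟨mem_biUnion hi hxi, hxP⟩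
    · exact notMem_biUnion_diff_of_mem hsep hi hvi hv
  · exact hC j hvj (hPR j hj hxP) fun h => hv.2 (h ▸ hxP)

end CliqueCover

namespace IsCliquePath

variable {V : Type} {G : SimpleGraph V} {n n' : ℕ} {K : Fin n → Set V} {K' : Fin n' → Set V}

theorem injective (hK : IsCliquePath G K) : Function.Injective K := hK.1

theorem isMaximalClique (hK : IsCliquePath G K) (i : Fin n) : IsMaximalClique G (K i) :=
  hK.2.1 i

theorem exists_eq (hK' : IsCliquePath G K') (hK : IsCliquePath G K) (j : Fin n) :
    ∃ i, K' i = K j :=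
  hK'.2.2.1 _ (hK.isMaximalClique j)

theorem mem_of_mem_uIcc (hK : IsCliquePath G K) {v : V} {i j k : Fin n} (hj : j ∈ uIcc i k)
    (hi : v ∈ K i) (hk : v ∈ K k) : v ∈ K j := by
  rcases mem_uIcc.1 hj with ⟨h₁, h₂⟩ | ⟨h₁, h₂⟩
  exacts [hK.2.2.2 v i j k h₁ h₂ hi hk, hK.2.2.2 v k j i h₁ h₂ hk hi]

theorem exists_mem_of_adj (hK : IsCliquePath G K) ⦃u v : V⦄ (huv : G.Adj u v) :
    ∃ i, u ∈ K i ∧ v ∈ K i := by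
  have hedge : G.IsClique {u, v} := SimpleGraph.isClique_pair.2 fun _ => huv
  obtain ⟨D, hD, huvD⟩ := exists_isMaximalClique_superset hedge
  obtain ⟨i, rfl⟩ := hK.2.2.1 D hD
  exact ⟨i, huvD (mem_insert u _), huvD (mem_insert_of_mem u rfl)⟩

end IsCliquePath

/-- The set `J` of the statement, for the positions `a`, `b` of `K'`. -/
def betweenIndices {V : Type} {n : ℕ} (K K' : Fin n → Set V) (a b : Fin n) : Set (Fin n) :=
  {j | ∃ i, K' i = K j ∧ ((a < i ∧ i < b) ∨ (b < i ∧ i < a))}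

theorem mem_betweenIndices {V : Type} {n : ℕ} {K K' : Fin n → Set V} {a b j : Fin n} :
    j ∈ betweenIndices K K' a b ↔ ∃ i ∈ uIoo a b, K' i = K j := by
  simp only [betweenIndices, mem_ofPred_eq, mem_uIoo_iff, and_comm]

namespace IsCliquePath

variable {V : Type} {G : SimpleGraph V} {ℓ : ℕ} {K K' : Fin (ℓ + 1) → Set V}
  {m m₁ e p : Fin (ℓ + 1)}

theorem inter_last_subset (hK : IsCliquePath G K) (hK' : IsCliquePath G K')
    (hm : K' m = K (Fin.last ℓ)) (hp : K p = K' e) {j : Fin (ℓ + 1)}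
    (hj : j ∈ {j | p ≤ j} ∪ betweenIndices K K' m e) : K p ∩ K (Fin.last ℓ) ⊆ K j := by
  rintro x ⟨hxp, hxl⟩
  rcases hj with hj | hj
  · exact hK.mem_of_mem_uIcc (mem_uIcc_of_le hj (Fin.le_last j)) hxp hxl
  · obtain ⟨q, hq, hKq⟩ := mem_betweenIndices.1 hj
    exact hKq ▸ hK'.mem_of_mem_uIcc (uIoo_subset_uIcc_self hq) (hm ▸ hxl) (hp ▸ hxp)

theorem inter_subset_inter_last (hK : IsCliquePath G K) (hK' : IsCliquePath G K')
    (hm : K' m = K (Fin.last ℓ)) (hp : K p = K' e) (he : IsTop e ∨ IsBot e)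
    {i j : Fin (ℓ + 1)} (hi : i ∉ {j | p ≤ j} ∪ betweenIndices K K' m e)
    (hj : j ∈ {j | p ≤ j} ∪ betweenIndices K K' m e) :
    K i ∩ K j ⊆ K p ∩ K (Fin.last ℓ) := by
  rintro v ⟨hvi, hvj⟩
  have hip : i < p := not_le.1 fun h => hi (Or.inl h)
  obtain ⟨i₀, hi₀⟩ := hK'.exists_eq hK i
  have hm_mem : m ∈ uIcc i₀ e := by
    refine (mem_uIcc_or_mem_uIcc_of_isTop_or_isBot he).resolve_left fun h => hi (Or.inr ?_)
    refine mem_betweenIndices.2 ⟨i₀, mem_uIoo_of_mem_uIcc h ?_ ?_, hi₀⟩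
    · rintro rfl
      exact hip.not_ge (hK.injective (hi₀.symm.trans hm) ▸ Fin.le_last p)
    · rintro rfl
      exact hip.ne (hK.injective (hi₀.symm.trans hp.symm))
  obtain ⟨q, hq, hvq⟩ : ∃ q ∈ uIcc m e, v ∈ K' q := by
    rcases hj with hj | hj
    · exact ⟨e, right_mem_uIcc, hp ▸ hK.mem_of_mem_uIcc (mem_uIcc_of_le hip.le hj) hvi hvj⟩
    · obtain ⟨q, hq, hKq⟩ := mem_betweenIndices.1 hj
      exact ⟨q, uIoo_subset_uIcc_self hq, hKq ▸ hvj⟩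
  have hvl : v ∈ K (Fin.last ℓ) :=
    hm ▸ hK'.mem_of_mem_uIcc (mem_uIcc_of_mem_uIcc_of_mem_uIcc hm_mem hq) (hi₀ ▸ hvi) hvq
  exact ⟨hK.mem_of_mem_uIcc (mem_uIcc_of_le hip.le (Fin.le_last p)) hvi hvl, hvl⟩

theorem zero_notMem (hK' : IsCliquePath G K') (hp : K p = K' e) (hm₁ : K' m₁ = K 0)
    (hside : (m₁ < m ∧ e = Fin.last ℓ) ∨ (m < m₁ ∧ e = 0)) :
    0 ∉ {j | p ≤ j} ∪ betweenIndices K K' m e := by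
  have hm_bounds := And.intro (Fin.zero_le m) (Fin.le_last m)
  rintro (h | h)
  · have hm₁e : m₁ = e := hK'.injective (hm₁.trans (Fin.le_zero_iff.1 h ▸ hp))
    rcases hside with ⟨_, rfl⟩ | ⟨_, rfl⟩ <;> omega
  · obtain ⟨q, hq, hKq⟩ := mem_betweenIndices.1 h
    have hqm₁ : q = m₁ := hK'.injective (hKq.trans hm₁.symm)
    have hq_bounds := And.intro (Fin.zero_le q) (Fin.le_last q)
    rw [mem_uIoo_iff] at hq
    rcases hside with ⟨_, rfl⟩ | ⟨_, rfl⟩ <;> omega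

end IsCliquePath

/-- Let `G` be a finite interval graph with clique path
`K 0, …, K (Fin.last ℓ)` (so `K 0` plays the role of `K_1` and `K (Fin.last ℓ)` the role
of `K_ℓ`).  Suppose `K'` is another clique path of `G` in which `K (Fin.last ℓ)` is not
an end (it occurs at the interior position `m`), the clique `K 0` occurs at position
`m₁`, and `e` is the end of `K'` on the opposite side of `K (Fin.last ℓ)` from `K 0`.
Let `K p = K' e`, and let `J` be the set of indices `j` such that `K j` lies strictly
between `K (Fin.last ℓ)` and `K' e` in the second clique path.  Then
`U = (⋃_{j ∈ {p,…,last} ∪ J} K j) \ (K p ∩ K (Fin.last ℓ))` is a nontrivial module of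
`G`; in fact every `v ∈ U` satisfies `N(v) \ U = K p ∩ K (Fin.last ℓ)`. -/
theorem nontrivial_module_of_two_clique_paths
    {V : Type} [Fintype V] (G : SimpleGraph V) (ℓ : ℕ)
    (K K' : Fin (ℓ + 1) → Set V)
    (hK : IsCliquePath G K) (hK' : IsCliquePath G K')
    (m m₁ e p : Fin (ℓ + 1))
    (hm : K' m = K (Fin.last ℓ)) (hm0 : m ≠ 0) (hml : m ≠ Fin.last ℓ)
    (hm₁ : K' m₁ = K 0)
    (hside : (m₁ < m ∧ e = Fin.last ℓ) ∨ (m < m₁ ∧ e = 0))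
    (hp : K p = K' e) :
    let J : Set (Fin (ℓ + 1)) :=
      {j | ∃ i : Fin (ℓ + 1), K' i = K j ∧ ((m < i ∧ i < e) ∨ (e < i ∧ i < m))}
    let U : Set V :=
      (⋃ j ∈ {j : Fin (ℓ + 1) | p ≤ j} ∪ J, K j) \ (K p ∩ K (Fin.last ℓ))
    (2 ≤ U.ncard ∧ U ≠ Set.univ ∧ IsModule G U) ∧
      ∀ v ∈ U, G.neighborSet v \ U = K p ∩ K (Fin.last ℓ) := by
  intro J U
  have hme : m ≠ e := by rcases hside with ⟨-, rfl⟩ | ⟨-, rfl⟩ <;> assumption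
  have he : IsTop e ∨ IsBot e := by
    rcases hside with ⟨-, rfl⟩ | ⟨-, rfl⟩
    exacts [Or.inl Fin.le_last, Or.inr Fin.zero_le]
  have hpl : K p ≠ K (Fin.last ℓ) := by
    rw [hp, ← hm]
    exact hK'.injective.ne hme.symm
  have hsep : ∀ i ∉ {j | p ≤ j} ∪ J, ∀ j ∈ {j | p ≤ j} ∪ J,
      K i ∩ K j ⊆ K p ∩ K (Fin.last ℓ) :=
    fun _ hi _ hj => hK.inter_subset_inter_last hK' hm hp he hi hj
  have hN : ∀ v ∈ U, G.neighborSet v \ U = K p ∩ K (Fin.last ℓ) := fun _ hv =>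
    neighborSet_diff_biUnion_diff_eq (fun i => (hK.isMaximalClique i).1)
      hK.exists_mem_of_adj (fun _ hj => hK.inter_last_subset hK' hm hp hj) hsep hv
  refine ⟨⟨?_, ?_, isModule_of_neighborSet_diff_eq hN⟩, hN⟩
  · exact (hK.isMaximalClique p).two_le_ncard_diff_inter (hK.isMaximalClique _) hpl
      (subset_biUnion_of_mem (Or.inl (le_refl p)))
      (subset_biUnion_of_mem (Or.inl (Fin.le_last p)))
  · have hl0 : K (Fin.last ℓ) ≠ K 0 := fun h =>
      hm0 (Fin.le_zero_iff.1 (hK.injective h ▸ Fin.le_last m))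
    obtain ⟨v, hv⟩ := (hK.isMaximalClique 0).nonempty (hK.isMaximalClique _).1 hl0
    exact (ne_univ_iff_exists_notMem _).2
      ⟨v, notMem_biUnion_diff_of_mem hsep (hK'.zero_notMem hp hm₁ hside) hv⟩
end

section
/- Let F be a nonempty set of graphs. If the class of F-free graphs has the CKS property, then F contains at least one star forest and at least one graph whose complement is a star forest. -/
attribute [local instance] Classical.propDecidable

/-- A graph `G` is `F`-free if no induced subgraph of `G` is isomorphic to a member of
`F`. -/
def FFree (F : GraphClass) {V : Type} [Fintype V] (G : SimpleGraph V) : Prop :=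
  ∀ (S : Set V) (W : Type) (_ : Fintype W) (H : SimpleGraph W),
    F W H → IsEmpty (G.induce S ≃g H)

/-- `U` is a maximal `F`-free set of `G`: `G[U]` is `F`-free and no proper superset of
`U` induces an `F`-free subgraph of `G`. -/
def IsMaxFFreeSet (F : GraphClass) {V : Type} [Fintype V] (G : SimpleGraph V)
    (U : Set V) : Prop :=
  FFree F (G.induce U) ∧ ∀ T : Set V, U ⊂ T → ¬ FFree F (G.induce T)

/-- The class of `F`-free graphs has the CKS property: there is a polynomial `p` such
that every graph `G` on `n` vertices having a maximal `F`-free set of size `n - 1` has at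
most `p(n)` maximal `F`-free sets. -/
def HasCKS_FFree (F : GraphClass) : Prop :=
  ∃ p : Polynomial ℕ, ∀ (V : Type) (_ : Fintype V) (G : SimpleGraph V),
    (∃ S : Set V, IsMaxFFreeSet F G S ∧ S.ncard = Fintype.card V - 1) →
    {S : Set V | IsMaxFFreeSet F G S}.ncard ≤ p.eval (Fintype.card V)

/-- A graph is a star forest if every connected component of it is a star: some vertex of
the component (its center) is adjacent to exactly the other vertices of the component,
and no two other vertices are adjacent.  (A single vertex counts as a degenerate star.) -/
def IsStarForest {W : Type} (H : SimpleGraph W) : Prop :=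
  ∀ c : H.ConnectedComponent, ∃ ctr ∈ c.supp,
    ∀ a ∈ c.supp, ∀ b ∈ c.supp, (H.Adj a b ↔ a ≠ b ∧ (a = ctr ∨ b = ctr))
/-! Let `Y` be a smallest set of vertices whose deletion turns some `H₀ ∈ F` into a star forest,
and suppose `Y ≠ ∅`. Glue `k` copies of `H₀` along `Y` and fix `x₀ ∈ Y`. By minimality of `|Y|`,
a vertex set that becomes a star forest once the `|Y| - 1` vertices of `Y - x₀` are deleted
induces an `F`-free graph. This applies to all vertices but `x₀` (leaving disjoint copies of
`H₀ - Y`), a maximal `F`-free set since the whole graph contains `H₀`; and, given a star cover of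
`H₀ - Y`, to `Y` together with the centres of the clones indexed by `S` and the leaves of the other
clones, for each `S ⊆ {1, …, k}` (leaving a star at `x₀`). Maximal extensions of these `2 ^ k`
sets are distinct, as one containing both the centres and the leaves of a clone contains a copy
of `H₀`. The graph has order linear in `k`, so this contradicts the CKS property for large `k`.
Since `G` is `F`-free iff `Gᶜ` is free of the complements of members of `F`, the CKS property
passes to that class, which gives the second member. -/

open SimpleGraph

namespace SimpleGraph

variable {V V' : Type} {G : SimpleGraph V} {G' : SimpleGraph V'}

/-- `C` is the set of centres of a decomposition of `G` into stars. -/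
structure IsStarCover (G : SimpleGraph V) (C : Set V) : Prop where
  adj_mem_iff : ∀ a b, G.Adj a b → (a ∈ C ↔ b ∉ C)
  eq_of_adj : ∀ a ∉ C, ∀ b c, G.Adj a b → G.Adj a c → b = c

def HasStarCover (G : SimpleGraph V) : Prop := ∃ C, G.IsStarCover C

lemma HasStarCover.comap (f : G →g G') (hf : Function.Injective f) (h : G'.HasStarCover) :
    G.HasStarCover := by
  obtain ⟨C, hC⟩ := h
  exact ⟨f ⁻¹' C, fun a b hab => hC.adj_mem_iff _ _ (f.map_adj hab),
    fun a ha b c hab hac => hf (hC.eq_of_adj _ ha _ _ (f.map_adj hab) (f.map_adj hac))⟩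

lemma hasStarCover_induce_of {X : Set V} (C : Set V)
    (hC : ∀ a ∈ X, ∀ b ∈ X, G.Adj a b → (a ∈ C ↔ b ∉ C))
    (hleaf : ∀ a ∈ X, a ∉ C → ∀ b ∈ X, ∀ c ∈ X, G.Adj a b → G.Adj a c → b = c) :
    (G.induce X).HasStarCover :=
  ⟨Subtype.val ⁻¹' C, fun a b hab => hC a a.2 b b.2 hab,
    fun a ha b c hab hac => Subtype.ext (hleaf a a.2 ha b b.2 c c.2 hab hac)⟩

lemma hasStarCover_induce_of_forall_adj {X : Set V} (c : V)
    (h : ∀ a ∈ X, ∀ b ∈ X, G.Adj a b → a = c ∨ b = c) : (G.induce X).HasStarCover := by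
  refine hasStarCover_induce_of {c} (fun a ha b hb hab => ?_)
    fun a ha hac b hb d hd hab had => ?_
  · rcases h a ha b hb hab with rfl | rfl
    · simp [hab.ne']
    · simp [hab.ne]
  · rw [Set.mem_singleton_iff] at hac
    rw [(h a ha b hb hab).resolve_left hac, (h a ha d hd had).resolve_left hac]

lemma IsStarCover.eq_or_adj_of_walk {C : Set V} (hC : G.IsStarCover C) {u w : V} (hw : w ∈ C)
    (p : G.Walk u w) : u = w ∨ G.Adj u w := by
  induction p with
  | nil => exact .inl rfl
  | cons hux p ih =>
    rcases ih hw with rfl | hxw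
    · exact .inr hux
    · exact .inl (hC.eq_of_adj _ (fun hx => (hC.adj_mem_iff _ _ hxw).1 hx hw) _ _ hux.symm hxw)

lemma HasStarCover.isStarForest (h : G.HasStarCover) : IsStarForest G := by
  obtain ⟨C, hC⟩ := h
  intro c
  by_cases hcenter : ∃ w ∈ c.supp, w ∈ C
  · obtain ⟨w, hw, hwC⟩ := hcenter
    have hadj : ∀ a ∈ c.supp, a ≠ w → G.Adj a w := fun a ha haw =>
      (hC.eq_or_adj_of_walk hwC (c.reachable_of_mem_supp ha hw).some).resolve_left haw
    have hleaf : ∀ a, G.Adj a w → a ∉ C := fun a haw ha => (hC.adj_mem_iff a w haw).1 ha hwC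
    refine ⟨w, hw, fun a ha b hb => ⟨fun hab => ⟨hab.ne, ?_⟩, ?_⟩⟩
    · by_contra! hne
      exact hleaf a (hadj a ha hne.1)
        ((hC.adj_mem_iff a b hab).2 (hleaf b (hadj b hb hne.2)))
    · rintro ⟨hab, rfl | rfl⟩
      · exact (hadj b hb hab.symm).symm
      · exact hadj a ha hab
  · push Not at hcenter
    have hno_adj : ∀ a ∈ c.supp, ∀ b, ¬ G.Adj a b := fun a ha b hab => by
      have hb : b ∈ c.supp := c.mem_supp_of_adj_mem_supp ha hab
      by_cases haC : a ∈ C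
      · exact hcenter a ha haC
      · exact hcenter b hb (by by_contra hbC; exact haC ((hC.adj_mem_iff a b hab).2 hbC))
    obtain ⟨v, rfl⟩ := c.exists_rep
    have hsingle : ∀ a ∈ (G.connectedComponentMk v).supp, a = v := fun a ha => by
      cases ((G.connectedComponentMk v).reachable_of_mem_supp ha rfl).some with
      | nil => rfl
      | cons hab _ => exact (hno_adj a ha _ hab).elim
    refine ⟨v, rfl, fun a ha b hb => iff_of_false (hno_adj a ha b) ?_⟩
    rw [hsingle a ha, hsingle b hb]
    exact fun h => h.1 rfl

lemma Embedding.isIndContained_induce {H : SimpleGraph V'} (f : H ↪g G) {T : Set V}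
    (hT : Set.range f ⊆ T) : H.IsIndContained (G.induce T) :=
  ⟨{ toFun := fun w => ⟨f w, hT ⟨w, rfl⟩⟩
     inj' := fun _ _ h => f.injective (congrArg Subtype.val h)
     map_rel_iff' := f.map_adj_iff }⟩

lemma induce_compl (G : SimpleGraph V) (T : Set V) : Gᶜ.induce T = (G.induce T)ᶜ := by
  ext a b
  simp [Subtype.ext_iff]

end SimpleGraph

def StarDeletionAtLeast (F : GraphClass) (ℓ : ℕ) : Prop :=
  ∀ (W : Type) [Fintype W] (H : SimpleGraph W), F W H →
    ∀ D : Set W, (H.induce Dᶜ).HasStarCover → ℓ ≤ D.ncard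

section FFree

variable {F : GraphClass} {V : Type} [Fintype V] {G : SimpleGraph V}

lemma fFree_iff_forall_not_isIndContained :
    FFree F G ↔ ∀ (W : Type) [Fintype W] (H : SimpleGraph W), F W H → ¬ H.IsIndContained G := by
  refine ⟨fun h W _ H hH hHG => ?_, fun h S W _ H hH => ⟨fun e => ?_⟩⟩
  · obtain ⟨S, ⟨e⟩⟩ := isIndContained_iff_exists_iso_induce.1 hHG
    exact (h S W _ H hH).false e.symm
  · exact h W H hH ⟨(Embedding.induce S).comp e.symm.toEmbedding⟩

lemma exists_isMaxFFreeSet_superset {U : Set V} (hU : FFree F (G.induce U)) :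
    ∃ M, U ⊆ M ∧ IsMaxFFreeSet F G M := by
  obtain ⟨M, hUM, hM⟩ := Finite.exists_le_maximal (p := fun T : Set V => FFree F (G.induce T)) hU
  exact ⟨M, hUM, hM.prop, fun T hMT hT => hMT.not_subset (hM.le_of_ge hT hMT.subset)⟩

/-- An induced copy of a member of `F` in `G[X]` becomes an induced subgraph of `G[X \ Z]`
once the at most `|Z|` of its vertices lying in `Z` are deleted. -/
lemma fFree_induce_of_hasStarCover_induce_sdiff {ℓ : ℕ}
    (hℓ : StarDeletionAtLeast F ℓ)
    {X Z : Set V} (hZ : Z.ncard < ℓ) (hXZ : (G.induce (X \ Z)).HasStarCover) :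
    FFree F (G.induce X) := by
  refine fFree_iff_forall_not_isIndContained.2 fun W _ H hH ⟨f⟩ => ?_
  set g := (Embedding.induce X).comp f
  have hD : (g ⁻¹' Z).ncard ≤ Z.ncard :=
    Set.ncard_le_ncard_of_injOn g (fun _ h => h) g.injective.injOn
  have hmaps : Set.MapsTo g (g ⁻¹' Z)ᶜ (X \ Z) := fun w hw => ⟨(f w).2, hw⟩
  have := hℓ W H hH _ (hXZ.comap (induceHom g.toHom hmaps)
    (induceHom_injective _ _ g.injective.injOn))
  omega

end FFree

open Filter Asymptotics Polynomial in
lemma Polynomial.eventually_eval_lt_two_pow (q : ℕ[X]) : ∀ᶠ k : ℕ in atTop, q.eval k < 2 ^ k := by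
  set qR := q.map (Nat.castRingHom ℝ)
  have hO : (fun x : ℝ => qR.eval x) =O[atTop] fun x => x ^ qR.natDegree := by
    simpa using isBigO_atTop_of_degree_le qR (X ^ qR.natDegree) (by simp [degree_le_natDegree])
  have ho := (hO.comp_tendsto tendsto_natCast_atTop_atTop).trans_isLittleO
    (isLittleO_pow_const_const_pow_of_one_lt qR.natDegree one_lt_two)
  filter_upwards [ho.bound one_half_pos] with k hk
  have : ((q.eval k : ℕ) : ℝ) ≤ 1 / 2 * 2 ^ k := by simpa [qR] using hk
  have : ((q.eval k : ℕ) : ℝ) < 2 ^ k := by linarith [pow_pos (two_pos (α := ℝ)) k]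
  exact_mod_cast this

section CloneGraph

variable {W₀ : Type} (H₀ : SimpleGraph W₀) (Y : Set W₀) (k : ℕ)

/-- `k` copies of `H₀` glued along `Y`: the vertices of `Y` are shared, those outside `Y` are
cloned, and distinct clones are not adjacent to each other. -/
def cloneGraph : SimpleGraph (Y ⊕ (↥Yᶜ × Fin k)) where
  Adj
    | .inl a, .inl b => H₀.Adj a b
    | .inl a, .inr q => H₀.Adj a q.1
    | .inr p, .inl b => H₀.Adj p.1 b
    | .inr p, .inr q => p.2 = q.2 ∧ H₀.Adj p.1 q.1
  symm := ⟨by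
    rintro (a | p) (b | q) h
    exacts [h.symm, h.symm, h.symm, ⟨h.1.symm, h.2.symm⟩]⟩
  loopless := ⟨by rintro (a | p) h; exacts [H₀.irrefl h, H₀.irrefl h.2]⟩

variable {H₀ Y k}

noncomputable def cloneVertex (i : Fin k) (w : W₀) : Y ⊕ (↥Yᶜ × Fin k) :=
  if h : w ∈ Y then .inl ⟨w, h⟩ else .inr (⟨w, h⟩, i)

noncomputable def cloneEmb (i : Fin k) : H₀ ↪g cloneGraph H₀ Y k where
  toFun := cloneVertex i
  inj' a b := by
    unfold cloneVertex
    split_ifs <;> simp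
  map_rel_iff' {a b} := by
    change (cloneGraph H₀ Y k).Adj (cloneVertex i a) (cloneVertex i b) ↔ H₀.Adj a b
    unfold cloneVertex
    split_ifs <;> simp [cloneGraph]

def pickSet (C : Set ↥Yᶜ) (S : Set (Fin k)) : Set (Y ⊕ (↥Yᶜ × Fin k)) :=
  {u | Sum.elim (fun _ => True) (fun p => p.1 ∈ C ↔ p.2 ∈ S) u}

lemma range_cloneEmb_subset_pickSet_union {C : Set ↥Yᶜ} {S S' : Set (Fin k)} {i : Fin k}
    (hi : ¬(i ∈ S ↔ i ∈ S')) :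
    Set.range (cloneEmb (H₀ := H₀) i) ⊆ pickSet C S ∪ pickSet C S' := by
  rintro _ ⟨w, rfl⟩
  change cloneVertex i w ∈ _
  unfold cloneVertex
  split_ifs with hw
  · simp [pickSet]
  · simp only [pickSet, Set.mem_union, Set.mem_ofPred_eq, Sum.elim_inr]
    tauto

end CloneGraph

section Counting

variable {F : GraphClass} {W₀ : Type} [Fintype W₀] {H₀ : SimpleGraph W₀} {Y : Set W₀} {k : ℕ}

lemma ncard_inl_image_compl_singleton_lt {β : Type} (x₀ : Y) :
    (Sum.inl '' {x₀}ᶜ : Set (Y ⊕ β)).ncard < Y.ncard := by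
  rw [Set.ncard_image_of_injective _ Sum.inl_injective, Set.ncard_compl, Set.ncard_singleton,
    Nat.card_coe_set_eq]
  have : 0 < Y.ncard := (Set.ncard_pos).2 ⟨x₀, x₀.2⟩
  omega

variable (hmin : StarDeletionAtLeast F Y.ncard)
  {C : Set ↥Yᶜ} (hC : (H₀.induce Yᶜ).IsStarCover C)
include hmin hC

lemma fFree_induce_pickSet (x₀ : Y) (S : Set (Fin k)) :
    FFree F ((cloneGraph H₀ Y k).induce (pickSet C S)) := by
  refine fFree_induce_of_hasStarCover_induce_sdiff hmin
    (ncard_inl_image_compl_singleton_lt x₀) (hasStarCover_induce_of_forall_adj (.inl x₀) ?_)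
  rintro (a | p) ⟨ha, haZ⟩ (b | q) ⟨hb, hbZ⟩ hab
  case inr.inr =>
    simp only [pickSet, Set.mem_ofPred_eq, Sum.elim_inr] at ha hb
    obtain ⟨hpq, hadj⟩ := hab
    have := hC.adj_mem_iff p.1 q.1 hadj
    rw [hpq] at ha
    tauto
  all_goals simp_all

lemma isMaxFFreeSet_compl_singleton (hH₀ : F W₀ H₀) (x₀ : Y) (i : Fin k) :
    IsMaxFFreeSet F (cloneGraph H₀ Y k) {.inl x₀}ᶜ := by
  refine ⟨fFree_induce_of_hasStarCover_induce_sdiff hmin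
    (ncard_inl_image_compl_singleton_lt x₀) ?_, fun T hT hTfree => ?_⟩
  · refine hasStarCover_induce_of {u | Sum.elim (fun _ => False) (fun p => p.1 ∈ C) u} ?_ ?_
    · rintro (a | p) ⟨ha, haZ⟩ (b | q) ⟨hb, hbZ⟩ hab
      case inr.inr => exact hC.adj_mem_iff p.1 q.1 hab.2
      all_goals simp_all
    · rintro (a | p) ⟨ha, haZ⟩ hpC (b | q) ⟨hb, hbZ⟩ (c | r) ⟨hc, hcZ⟩ hpb hpc
      case inr.inr.inr =>
        rw [Prod.ext (hC.eq_of_adj p.1 hpC q.1 r.1 hpb.2 hpc.2) (hpb.1.symm.trans hpc.1)]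
      all_goals simp_all
  · have hTuniv : T = Set.univ := by
      obtain ⟨v, hvT, hv⟩ := Set.exists_of_ssubset hT
      rw [Set.notMem_compl_iff, Set.mem_singleton_iff] at hv
      exact Set.eq_univ_of_forall fun u => by
        by_cases hu : u = .inl x₀
        exacts [hu ▸ hv ▸ hvT, hT.subset hu]
    exact fFree_iff_forall_not_isIndContained.1 hTfree W₀ H₀ hH₀
      ((cloneEmb i).isIndContained_induce (hTuniv ▸ Set.subset_univ _))

lemma two_pow_le_ncard_isMaxFFreeSet (hH₀ : F W₀ H₀) (x₀ : Y) :
    2 ^ k ≤ {M | IsMaxFFreeSet F (cloneGraph H₀ Y k) M}.ncard := by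
  choose M hpickM hM using fun S : Set (Fin k) =>
    exists_isMaxFFreeSet_superset (fFree_induce_pickSet hmin hC x₀ S)
  have hMinj : Function.Injective M := fun S S' hSS' => by
    by_contra hne
    obtain ⟨i, hi⟩ : ∃ i, ¬(i ∈ S ↔ i ∈ S') := by
      by_contra! h
      exact hne (Set.ext h)
    have hcopy : Set.range (cloneEmb (H₀ := H₀) i) ⊆ M S :=
      (range_cloneEmb_subset_pickSet_union hi).trans
        (Set.union_subset (hpickM S) (hSS' ▸ hpickM S'))
    exact fFree_iff_forall_not_isIndContained.1 (hM S).1 W₀ H₀ hH₀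
      ((cloneEmb i).isIndContained_induce hcopy)
  calc 2 ^ k = Nat.card (Set (Fin k)) := by simp [Nat.card_eq_fintype_card, Fintype.card_set]
    _ ≤ Nat.card {M | IsMaxFFreeSet F (cloneGraph H₀ Y k) M} :=
      Nat.card_le_card_of_injective (fun S => ⟨M S, hM S⟩)
        fun S S' h => hMinj (congrArg Subtype.val h)
    _ = _ := Nat.card_coe_set_eq _

end Counting

open Filter Polynomial in
lemma not_hasCKS_FFree_of_minimal_deletion {F : GraphClass} {W₀ : Type} [Fintype W₀]
    {H₀ : SimpleGraph W₀} {Y : Set W₀} (hH₀ : F W₀ H₀) (hY : Y.Nonempty)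
    (hcover : (H₀.induce Yᶜ).HasStarCover)
    (hmin : StarDeletionAtLeast F Y.ncard) :
    ¬ HasCKS_FFree F := by
  rintro ⟨p, hp⟩
  obtain ⟨x₀, hx₀⟩ := hY
  obtain ⟨C, hC⟩ := hcover
  set a := Fintype.card Y
  set b := Fintype.card ↥Yᶜ
  obtain ⟨k, hlt, hk⟩ := ((p.comp (Polynomial.C a + Polynomial.C b * X)).eventually_eval_lt_two_pow
    |>.and (eventually_gt_atTop 0)).exists
  have hcard : Fintype.card (Y ⊕ (↥Yᶜ × Fin k)) = a + b * k := by simp [a, b]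
  have hbound := hp _ inferInstance (cloneGraph H₀ Y k) ⟨_,
    isMaxFFreeSet_compl_singleton hmin hC hH₀ ⟨x₀, hx₀⟩ ⟨0, hk⟩, by
      rw [Set.ncard_compl, Set.ncard_singleton, Nat.card_eq_fintype_card]⟩
  have := two_pow_le_ncard_isMaxFFreeSet hmin hC hH₀ (k := k) ⟨x₀, hx₀⟩
  simp only [eval_comp, eval_add, eval_mul, eval_C, eval_X] at hlt
  rw [hcard] at hbound
  omega

theorem exists_isStarForest_of_hasCKS_FFree {F : GraphClass}
    (hFne : ∃ (W : Type) (_ : Fintype W) (H : SimpleGraph W), F W H) (hcks : HasCKS_FFree F) :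
    ∃ (W : Type) (_ : Fintype W) (H : SimpleGraph W), F W H ∧ IsStarForest H := by
  have hdel : ∃ m, ∃ (W : Type) (_ : Fintype W) (H : SimpleGraph W), F W H ∧
      ∃ D : Set W, D.ncard = m ∧ (H.induce Dᶜ).HasStarCover := by
    obtain ⟨W, _, H, hH⟩ := hFne
    exact ⟨_, W, _, H, hH, Set.univ, rfl, ∅, fun a => (a.2 trivial).elim,
      fun a => (a.2 trivial).elim⟩
  obtain ⟨W₀, _, H₀, hH₀, Y, hY, hcover⟩ := Nat.find_spec hdel
  have hmin : StarDeletionAtLeast F Y.ncard :=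
    fun W _ H hH D hD => hY ▸ Nat.find_min' hdel ⟨W, _, H, hH, D, rfl, hD⟩
  rcases Y.eq_empty_or_nonempty with rfl | hYne
  · rw [Set.compl_empty] at hcover
    exact ⟨W₀, _, H₀, hH₀,
      (hcover.comap (induceUnivIso H₀).symm.toHom (induceUnivIso H₀).symm.injective).isStarForest⟩
  · exact absurd hcks (not_hasCKS_FFree_of_minimal_deletion hH₀ hYne hcover hmin)

def complClass (F : GraphClass) : GraphClass := fun W _ H => F W Hᶜ

section Complement

variable {F : GraphClass}

lemma fFree_complClass_iff {V : Type} [Fintype V] {G : SimpleGraph V} :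
    FFree (complClass F) G ↔ FFree F Gᶜ := by
  simp only [fFree_iff_forall_not_isIndContained]
  refine ⟨fun h W _ H hH hHG => h W Hᶜ (by rwa [complClass, compl_compl]) ?_,
    fun h W _ H hH hHG => h W Hᶜ hH (compl_isIndContained_compl.2 hHG)⟩
  rwa [← compl_isIndContained_compl, compl_compl]

lemma isMaxFFreeSet_complClass_iff {V : Type} [Fintype V] {G : SimpleGraph V} {U : Set V} :
    IsMaxFFreeSet (complClass F) G U ↔ IsMaxFFreeSet F Gᶜ U := by
  simp only [IsMaxFFreeSet, fFree_complClass_iff, induce_compl]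

lemma HasCKS_FFree.complClass (h : HasCKS_FFree F) : HasCKS_FFree (complClass F) := by
  obtain ⟨p, hp⟩ := h
  refine ⟨p, fun V _ G hG => ?_⟩
  simp only [isMaxFFreeSet_complClass_iff] at hG ⊢
  exact hp V _ Gᶜ hG

end Complement

/-- Let `F` be a nonempty set of graphs.  If the class of `F`-free
graphs has the CKS property, then `F` contains a star forest and a graph whose complement
is a star forest. -/
theorem cks_implies_starForest_and_complement
    (F : GraphClass)
    (hFne : ∃ (W : Type) (_ : Fintype W) (H : SimpleGraph W), F W H)
    (hcks : HasCKS_FFree F) :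
    (∃ (W : Type) (_ : Fintype W) (H : SimpleGraph W), F W H ∧ IsStarForest H) ∧
    (∃ (W : Type) (_ : Fintype W) (H : SimpleGraph W), F W H ∧ IsStarForest Hᶜ) := by
  refine ⟨exists_isStarForest_of_hasCKS_FFree hFne hcks, ?_⟩
  obtain ⟨W, iW, H, hH⟩ := hFne
  obtain ⟨W', _, H', hH', hstar⟩ := exists_isStarForest_of_hasCKS_FFree (F := complClass F)
    ⟨W, iW, Hᶜ, by rwa [complClass, compl_compl]⟩ hcks.complClass
  exact ⟨W', _, H'ᶜ, hH', by rwa [compl_compl]⟩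
end

section
/- Let G be a finite graph and v ∈ V(G) a vertex such that V(G) \ {v} is a maximal cluster set of G. Then G has at most c + 2 maximal cluster sets, where c is the number of connected components of G − v. -/
/-- `S` is a cluster set of `G`: the induced subgraph `G[S]` is a cluster graph, i.e. it
has no induced path on three vertices. -/
def IsClusterSet {V : Type} (G : SimpleGraph V) (S : Set V) : Prop :=
  ∀ a ∈ S, ∀ b ∈ S, ∀ c ∈ S, G.Adj a b → G.Adj b c → a ≠ c → G.Adj a c

/-- `S` is a maximal cluster set of `G`. -/
def IsMaxClusterSet {V : Type} (G : SimpleGraph V) (S : Set V) : Prop :=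
  IsClusterSet G S ∧ ∀ T : Set V, S ⊂ T → ¬ IsClusterSet G T

/-!
Every maximal cluster set `S` equals one of `c + 2` candidate cluster sets, because it is
contained in one of them. If `v ∉ S`, then `S ⊆ V \ {v}`; if `S` contains `v` but no
neighbour of `v`, it lies among the non-neighbours of `v`. Otherwise `S` contains `v` and a
neighbour `a`. As `V \ {v}` is a cluster set, every component of `G - v` is a clique, and so
the neighbours of `v` in `S` are exactly the vertices of `S` in the component of `a`.
-/

open SimpleGraph

variable {V : Type} {G : SimpleGraph V}

theorem IsClusterSet.subset {S T : Set V} (hT : IsClusterSet G T) (hST : S ⊆ T) :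
    IsClusterSet G S :=
  fun a ha b hb c hc => hT a (hST ha) b (hST hb) c (hST hc)

theorem IsMaxClusterSet.eq_of_subset {S T : Set V} (hS : IsMaxClusterSet G S)
    (hT : IsClusterSet G T) (hST : S ⊆ T) : S = T :=
  by_contra fun hne => hS.2 T (hST.ssubset_of_ne hne) hT

theorem IsClusterSet.of_diff_singleton {S : Set V} {v : V} (hS : IsClusterSet G (S \ {v}))
    (hclique : ∀ a ∈ S, ∀ c ∈ S, G.Adj v a → G.Adj v c → a ≠ c → G.Adj a c)
    (hclosed : ∀ b ∈ S, ∀ c ∈ S, G.Adj v b → G.Adj b c → c ≠ v → G.Adj v c) :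
    IsClusterSet G S := by
  intro a ha b hb c hc hab hbc hac
  obtain rfl | hbv := eq_or_ne b v
  · exact hclique a ha c hc hab.symm hbc hac
  obtain rfl | hav := eq_or_ne a v
  · exact hclosed b hb c hc hab hbc hac.symm
  obtain rfl | hcv := eq_or_ne c v
  · exact (hclosed b hb a ha hbc.symm hab.symm hav).symm
  exact hS a ⟨ha, hav⟩ b ⟨hb, hbv⟩ c ⟨hc, hcv⟩ hab hbc hac

theorem IsClusterSet.adj_of_reachable {U : Set V} (hU : IsClusterSet G U) {x y : U}
    (hxy : (G.induce U).Reachable x y) (hne : x ≠ y) : G.Adj x y := by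
  obtain ⟨w⟩ := hxy
  induction w with
  | nil => exact absurd rfl hne
  | @cons a b c hab w ih =>
    obtain rfl | hbc := eq_or_ne b c
    · exact hab
    exact hU a a.2 b b.2 c c.2 hab (ih hbc) (Subtype.val_injective.ne hne)

/-- For a component `C` of `G - v`: the vertex `v`, its neighbours in `C`, and its
non-neighbours outside `C`. -/
def componentClusterSet (G : SimpleGraph V) (v : V) (C : (G.induce {v}ᶜ).ConnectedComponent) :
    Set V :=
  {x | G.Adj v x ↔ x ∈ Subtype.val '' C.supp}

section

variable {v : V} (hU : IsClusterSet G {v}ᶜ)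
include hU

theorem isClusterSet_compl_neighborSet : IsClusterSet G (G.neighborSet v)ᶜ :=
  .of_diff_singleton (hU.subset fun _ hx => hx.2)
    (fun _ ha _ _ hva => absurd hva ha) (fun _ hb _ _ hvb => absurd hvb hb)

theorem isClusterSet_componentClusterSet (C : (G.induce {v}ᶜ).ConnectedComponent) :
    IsClusterSet G (componentClusterSet G v C) := by
  refine .of_diff_singleton (hU.subset fun _ hx => hx.2) ?_ ?_
  · rintro _ ha _ hc hva hvc hac
    obtain ⟨a, ha', rfl⟩ := ha.1 hva
    obtain ⟨c, hc', rfl⟩ := hc.1 hvc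
    exact hU.adj_of_reachable (C.reachable_of_mem_supp ha' hc') (ne_of_apply_ne _ hac)
  · rintro _ hb c hc hvb hbc hcv
    obtain ⟨b, hb', rfl⟩ := hb.1 hvb
    exact hc.2 ⟨⟨c, hcv⟩, C.mem_supp_of_adj_mem_supp hb' hbc, rfl⟩

theorem subset_componentClusterSet {S : Set V} (hS : IsClusterSet G S) (hv : v ∈ S) {a : V}
    (ha : a ∈ S) (hva : G.Adj v a) :
    S ⊆ componentClusterSet G v ((G.induce {v}ᶜ).connectedComponentMk ⟨a, hva.ne'⟩) := by
  intro x hx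
  constructor
  · intro hvx
    refine ⟨⟨x, hvx.ne'⟩, ?_, rfl⟩
    obtain rfl | hax := eq_or_ne a x
    · rfl
    have hax' : (G.induce {v}ᶜ).Adj ⟨a, hva.ne'⟩ ⟨x, hvx.ne'⟩ :=
      hS a ha v hv x hx hva.symm hvx hax
    exact ConnectedComponent.mem_supp_of_adj_mem_supp _
      ConnectedComponent.connectedComponentMk_mem hax'
  · rintro ⟨y, hy, rfl⟩
    obtain rfl | hay := eq_or_ne ⟨a, hva.ne'⟩ y
    · exact hva
    have hreach := ConnectedComponent.reachable_of_mem_supp _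
      ConnectedComponent.connectedComponentMk_mem hy
    exact hS v hv a ha y hx hva (hU.adj_of_reachable hreach hay) (Ne.symm y.2)

theorem setOf_isMaxClusterSet_subset :
    {S | IsMaxClusterSet G S} ⊆
      insert {v}ᶜ (insert (G.neighborSet v)ᶜ (Set.range (componentClusterSet G v))) := by
  intro S hS
  by_cases hv : v ∈ S
  · by_cases hN : ∃ a ∈ S, G.Adj v a
    · obtain ⟨a, ha, hva⟩ := hN
      exact .inr <| .inr ⟨_, (hS.eq_of_subset (isClusterSet_componentClusterSet hU _)
        (subset_componentClusterSet hU hS.1 hv ha hva)).symm⟩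
    · exact .inr <| .inl <| hS.eq_of_subset (isClusterSet_compl_neighborSet hU)
        fun x hx hvx => hN ⟨x, hx, hvx⟩
  · exact .inl <| hS.eq_of_subset hU fun x hx hxv => hv (hxv ▸ hx)

end

/-- Let `G` be a finite graph and `v` a vertex such that `V(G) \ {v}`
is a maximal cluster set of `G`.  Then `G` has at most `c + 2` maximal cluster sets,
where `c` is the number of connected components of `G − v`. -/
theorem card_maxClusterSets_of_almost_cluster
    {V : Type} [Fintype V] (G : SimpleGraph V) (v : V)
    (h : IsMaxClusterSet G (({v} : Set V)ᶜ)) :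
    {S : Set V | IsMaxClusterSet G S}.ncard ≤
      Nat.card (G.induce (({v} : Set V)ᶜ)).ConnectedComponent + 2 := by
  have hrange : (Set.range (componentClusterSet G v)).ncard ≤
      Nat.card (G.induce (({v} : Set V)ᶜ)).ConnectedComponent := by
    rw [← Nat.card_coe_set_eq]
    exact Finite.card_range_le _
  calc {S : Set V | IsMaxClusterSet G S}.ncard
      ≤ (insert {v}ᶜ (insert (G.neighborSet v)ᶜ (Set.range (componentClusterSet G v)))).ncard :=
        Set.ncard_le_ncard (setOf_isMaxClusterSet_subset h.1) (Set.toFinite _)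
    _ ≤ (Set.range (componentClusterSet G v)).ncard + 2 :=
        (Set.ncard_insert_le _ _).trans (Nat.succ_le_succ (Set.ncard_insert_le _ _))
    _ ≤ _ := by omega
end

section
/- Let G be a finite graph and let G' be the graph obtained from G by adding, for each vertex v ∈ V(G), a new vertex v' adjacent exactly to v, and one further new vertex u adjacent exactly to all the new vertices v'. Then no vertex of V(G') \ V(G) lies in any wheel of G' (neither as a center nor as a rim vertex); every maximal wheel-free set of G' contains all vertices of V(G') \ V(G) and induces a connected subgraph of G'; and a set S ⊆ V(G) is a maximal wheel-free set of G if and only if S ∪ (V(G') \ V(G)) is a maximal wheel-free set of G'. -/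
/-!
Every vertex of a wheel lies in a triangle: a rim vertex, its neighbour on the rim and the center
are pairwise adjacent. No new vertex of `pendantExt G` lies in a triangle (the two neighbours
`v`, `u` of `v'` are not adjacent, and the neighbours of `u` are pairwise non-adjacent), so every
wheel of `pendantExt G` is the image of a wheel of `G`, and whether `U` is wheel-free depends only
on `Sum.inl ⁻¹' U`. As `Sum.inl ⁻¹' ·` and `S ↦ Sum.inl '' S ∪ Set.range Sum.inr` form a Galois
insertion, the maximal wheel-free sets of `pendantExt G` are exactly the images of those of `G`.
They contain the hub `u`, which every vertex reaches in at most two steps.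
-/

/-- A wheel of `G` with center `c` and rim `C`: `C` is a set of neighbors of `c` inducing
a cycle on at least three vertices. -/
def IsWheel {V : Type} (G : SimpleGraph V) (c : V) (C : Set V) : Prop :=
  C ⊆ G.neighborSet c ∧ ∃ n : ℕ, 3 ≤ n ∧ Nonempty (G.induce C ≃g SimpleGraph.cycleGraph n)

/-- `U` is wheel-free: the induced subgraph `G[U]` contains no wheel. -/
def WheelFreeSet {V : Type} (G : SimpleGraph V) (U : Set V) : Prop :=
  ¬ ∃ (c : V) (C : Set V), c ∈ U ∧ C ⊆ U ∧ IsWheel G c C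

/-- `U` is a maximal wheel-free set. -/
def IsMaxWheelFreeSet {V : Type} (G : SimpleGraph V) (U : Set V) : Prop :=
  WheelFreeSet G U ∧ ∀ T : Set V, U ⊂ T → ¬ WheelFreeSet G T

/-- The graph `G'` obtained from `G` by adding, for each vertex `v` (i.e. `Sum.inl v`),
a new pendant vertex `v' = Sum.inr (Sum.inl v)` adjacent exactly to `v`, and one further
new vertex `u = Sum.inr (Sum.inr ())` adjacent exactly to all the vertices `v'`. -/
def pendantExt {V : Type} (G : SimpleGraph V) : SimpleGraph (V ⊕ (V ⊕ Unit)) :=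
  SimpleGraph.fromRel (fun a b =>
    (∃ x y, a = Sum.inl x ∧ b = Sum.inl y ∧ G.Adj x y) ∨
    (∃ x, a = Sum.inl x ∧ b = Sum.inr (Sum.inl x)) ∨
    (∃ x, a = Sum.inr (Sum.inl x) ∧ b = Sum.inr (Sum.inr ())))

namespace GaloisInsertion

variable {α β : Type*} [PartialOrder α] [PartialOrder β] {l : α → β} {u : β → α}

theorem u_l_eq_of_maximal_comp (gi : GaloisInsertion l u) {P : β → Prop} {a : α}
    (ha : Maximal (P ∘ l) a) : u (l a) = a :=
  le_antisymm (ha.2 (by simpa [Function.comp, gi.l_u_eq] using ha.1) (gi.gc.le_u_l a))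
    (gi.gc.le_u_l a)

theorem maximal_comp_u_iff (gi : GaloisInsertion l u) {P : β → Prop} {b : β} :
    Maximal (P ∘ l) (u b) ↔ Maximal P b := by
  refine ⟨fun h => ⟨?_, fun c hc hbc => ?_⟩, fun h => ⟨?_, fun a ha hba => ?_⟩⟩
  · simpa [Function.comp, gi.l_u_eq] using h.1
  · have hcb : u c ≤ u b :=
      h.2 (by simpa [Function.comp, gi.l_u_eq] using hc) (gi.gc.monotone_u hbc)
    simpa [gi.l_u_eq] using gi.gc.monotone_l hcb
  · simpa [Function.comp, gi.l_u_eq] using h.1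
  · have hlb : l (u b) ≤ l a := gi.gc.monotone_l hba
    rw [gi.l_u_eq] at hlb
    exact (gi.gc.le_u_l a).trans (gi.gc.monotone_u (h.2 ha hlb))

end GaloisInsertion

def Sum.giPreimageInl (α β : Type*) :
    GaloisInsertion (Sum.inl ⁻¹' · : Set (α ⊕ β) → Set α)
      (fun s => Sum.inl '' s ∪ Set.range Sum.inr) :=
  .monotoneIntro (fun _ _ h => Set.union_subset_union_left _ (Set.image_mono h))
    (fun _ _ h => Set.preimage_mono h)
    (fun U => (Set.image_preimage_inl_union_image_preimage_inr U).symm.subset.trans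
      (Set.union_subset_union_right _ (Set.image_subset_range _ _)))
    (fun s => by simp [Set.preimage_union, Set.preimage_image_eq s Sum.inl_injective])

noncomputable def SimpleGraph.Embedding.induceImage {V W : Type*} {G : SimpleGraph V}
    {H : SimpleGraph W} (f : G ↪g H) (C : Set V) : G.induce C ≃g H.induce (f '' C) where
  toEquiv := Equiv.Set.image f C f.injective
  map_rel_iff' := by simp

section Wheels

variable {V W : Type} {G : SimpleGraph V} {c : V} {C : Set V}

theorem isMaxWheelFreeSet_iff_maximal {U : Set V} :
    IsMaxWheelFreeSet G U ↔ Maximal (WheelFreeSet G) U :=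
  maximal_iff_forall_gt.symm

theorem IsWheel.rim_nonempty (h : IsWheel G c C) : C.Nonempty := by
  obtain ⟨-, n, hn, ⟨e⟩⟩ := h
  exact ⟨_, (e.symm ⟨0, by omega⟩).2⟩

theorem IsWheel.exists_adj_of_mem_rim (h : IsWheel G c C) {w : V} (hw : w ∈ C) :
    ∃ a ∈ C, G.Adj w a := by
  obtain ⟨-, n, hn, ⟨e⟩⟩ := h
  obtain ⟨m, rfl⟩ : ∃ m, n = m + 2 := ⟨n - 2, by omega⟩
  have hadj : (SimpleGraph.cycleGraph (m + 2)).Adj (e ⟨w, hw⟩) (e ⟨w, hw⟩ + 1) :=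
    SimpleGraph.cycleGraph_adj.2 (.inr (by simp))
  exact ⟨_, (e.symm _).2, by simpa using e.symm.map_adj_iff.2 hadj⟩

theorem IsWheel.map_iff {H : SimpleGraph W} (f : G ↪g H) :
    IsWheel H (f c) (f '' C) ↔ IsWheel G c C := by
  refine and_congr ?_ (exists_congr fun n => and_congr_right fun _ =>
    ⟨fun ⟨e⟩ => ⟨(f.induceImage C).trans e⟩, fun ⟨e⟩ => ⟨(f.induceImage C).symm.trans e⟩⟩)
  simp [Set.subset_def]

end Wheels

section PendantExt

variable {V : Type} {G : SimpleGraph V}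

@[simp]
theorem pendantExt_adj_inl_inl {x y : V} :
    (pendantExt G).Adj (.inl x) (.inl y) ↔ G.Adj x y := by
  simp [pendantExt, G.adj_comm y x, and_iff_right_of_imp G.ne_of_adj]

@[simp]
theorem pendantExt_adj_inl_inr {x : V} {w : V ⊕ Unit} :
    (pendantExt G).Adj (.inl x) (.inr w) ↔ w = .inl x := by
  simp [pendantExt, eq_comm]

@[simp]
theorem pendantExt_adj_inr_inr {w w' : V ⊕ Unit} :
    (pendantExt G).Adj (.inr w) (.inr w') ↔ w.isLeft ≠ w'.isLeft := by
  cases w <;> cases w' <;> simp [pendantExt]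

@[simp]
theorem pendantExt_adj_inr_inl {w : V ⊕ Unit} {x : V} :
    (pendantExt G).Adj (.inr w) (.inl x) ↔ w = .inl x := by
  rw [SimpleGraph.adj_comm, pendantExt_adj_inl_inr]

def pendantExtInl : G ↪g pendantExt G :=
  ⟨.inl, pendantExt_adj_inl_inl⟩

theorem pendantExt_not_adj_of_adj_inr {w : V ⊕ Unit} {a b : V ⊕ (V ⊕ Unit)}
    (ha : (pendantExt G).Adj (.inr w) a) (hb : (pendantExt G).Adj (.inr w) b) :
    ¬ (pendantExt G).Adj a b := by
  rcases a with a | a | a <;> rcases b with b | b | b <;> rcases w with w | w <;> simp_all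

theorem not_isWheel_pendantExt_inr {w : V ⊕ Unit} {C : Set (V ⊕ (V ⊕ Unit))} :
    ¬ IsWheel (pendantExt G) (.inr w) C := fun h =>
  let ⟨_, hb⟩ := h.rim_nonempty
  let ⟨_, ha, hba⟩ := h.exists_adj_of_mem_rim hb
  pendantExt_not_adj_of_adj_inr (h.1 hb) (h.1 ha) hba

theorem IsWheel.inr_not_mem_rim {c : V ⊕ (V ⊕ Unit)} {C : Set (V ⊕ (V ⊕ Unit))}
    (h : IsWheel (pendantExt G) c C) (w : V ⊕ Unit) : .inr w ∉ C := fun hw =>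
  let ⟨_, ha, hwa⟩ := h.exists_adj_of_mem_rim hw
  pendantExt_not_adj_of_adj_inr (h.1 hw).symm hwa (h.1 ha)

theorem wheelFreeSet_pendantExt_iff {U : Set (V ⊕ (V ⊕ Unit))} :
    WheelFreeSet (pendantExt G) U ↔ WheelFreeSet G (Sum.inl ⁻¹' U) := by
  refine not_congr ⟨?_, ?_⟩
  · rintro ⟨c | w, C, hc, hC, h⟩
    · have hCrange : C ⊆ Set.range Sum.inl := by
        rintro (x | w) hx
        exacts [⟨x, rfl⟩, absurd hx (h.inr_not_mem_rim w)]
      rw [← Set.image_preimage_eq_of_subset hCrange] at h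
      exact ⟨c, Sum.inl ⁻¹' C, hc, Set.preimage_mono hC, (IsWheel.map_iff pendantExtInl).1 h⟩
    · exact absurd h not_isWheel_pendantExt_inr
  · rintro ⟨c, C, hc, hC, h⟩
    exact ⟨.inl c, .inl '' C, hc, Set.image_subset_iff.2 hC,
      (IsWheel.map_iff pendantExtInl).2 h⟩

theorem induce_pendantExt_connected {U : Set (V ⊕ (V ⊕ Unit))}
    (hU : Set.range Sum.inr ⊆ U) : ((pendantExt G).induce U).Connected := by
  have hub : .inr (.inr ()) ∈ U := hU ⟨_, rfl⟩
  have toHub : ∀ a : U, ((pendantExt G).induce U).Reachable a ⟨_, hub⟩ := by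
    rintro ⟨a | a | ⟨⟩, ha⟩
    · have hpendant : .inr (.inl a) ∈ U := hU ⟨_, rfl⟩
      exact (SimpleGraph.Adj.reachable (v := ⟨_, hpendant⟩) (by simp)).trans
        (SimpleGraph.Adj.reachable (by simp))
    · exact SimpleGraph.Adj.reachable (by simp)
    · rfl
  have : Nonempty U := ⟨⟨_, hub⟩⟩
  exact ⟨fun a b => (toHub a).trans (toHub b).symm⟩

end PendantExt

theorem wheelFree_connected_reduction_general
    {V : Type} (G : SimpleGraph V) :
    (∀ w ∈ Set.range (Sum.inr : V ⊕ Unit → V ⊕ (V ⊕ Unit)),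
      (¬ ∃ C : Set (V ⊕ (V ⊕ Unit)), IsWheel (pendantExt G) w C) ∧
      (¬ ∃ (c : V ⊕ (V ⊕ Unit)) (C : Set (V ⊕ (V ⊕ Unit))),
          IsWheel (pendantExt G) c C ∧ w ∈ C)) ∧
    (∀ S : Set (V ⊕ (V ⊕ Unit)), IsMaxWheelFreeSet (pendantExt G) S →
      Set.range (Sum.inr : V ⊕ Unit → V ⊕ (V ⊕ Unit)) ⊆ S ∧
      ((pendantExt G).induce S).Connected) ∧
    (∀ S : Set V, IsMaxWheelFreeSet G S ↔
      IsMaxWheelFreeSet (pendantExt G)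
        (Sum.inl '' S ∪ Set.range (Sum.inr : V ⊕ Unit → V ⊕ (V ⊕ Unit)))) := by
  have hWF : WheelFreeSet (pendantExt G) = WheelFreeSet G ∘ (Sum.inl ⁻¹' ·) :=
    funext fun _ => propext wheelFreeSet_pendantExt_iff
  have gi := Sum.giPreimageInl V (V ⊕ Unit)
  simp only [isMaxWheelFreeSet_iff_maximal, hWF]
  refine ⟨?_, fun U hU => ?_, fun S => gi.maximal_comp_u_iff.symm⟩
  · rintro _ ⟨w, rfl⟩
    exact ⟨fun ⟨_, h⟩ => not_isWheel_pendantExt_inr h, fun ⟨_, _, h, hw⟩ => h.inr_not_mem_rim w hw⟩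
  · have hrange : Set.range Sum.inr ⊆ U := gi.u_l_eq_of_maximal_comp hU ▸ Set.subset_union_right
    exact ⟨hrange, induce_pendantExt_connected hrange⟩

/-- Let `G` be a finite graph and `G'` the graph `pendantExt G`.  The
new vertices (`Set.range Sum.inr`) lie in no wheel of `G'`, neither as centers nor as rim
vertices; every maximal wheel-free set of `G'` contains all new vertices and induces a
connected subgraph of `G'`; and `S ⊆ V(G)` is a maximal wheel-free set of `G` if and
only if `S` together with all the new vertices is a maximal wheel-free set of `G'`. -/
theorem wheelFree_connected_reduction
    {V : Type} [Fintype V] (G : SimpleGraph V) :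
    (∀ w ∈ Set.range (Sum.inr : V ⊕ Unit → V ⊕ (V ⊕ Unit)),
      (¬ ∃ C : Set (V ⊕ (V ⊕ Unit)), IsWheel (pendantExt G) w C) ∧
      (¬ ∃ (c : V ⊕ (V ⊕ Unit)) (C : Set (V ⊕ (V ⊕ Unit))),
          IsWheel (pendantExt G) c C ∧ w ∈ C)) ∧
    (∀ S : Set (V ⊕ (V ⊕ Unit)), IsMaxWheelFreeSet (pendantExt G) S →
      Set.range (Sum.inr : V ⊕ Unit → V ⊕ (V ⊕ Unit)) ⊆ S ∧
      ((pendantExt G).induce S).Connected) ∧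
    (∀ S : Set V, IsMaxWheelFreeSet G S ↔
      IsMaxWheelFreeSet (pendantExt G)
        (Sum.inl '' S ∪ Set.range (Sum.inr : V ⊕ Unit → V ⊕ (V ⊕ Unit)))) :=
  wheelFree_connected_reduction_general G
end

section
/- For every integer k ≥ 1, the disjoint union of k copies of the cycle C4 on four vertices has exactly 4^k maximal induced forests and exactly 4k maximal induced trees. -/
/-- The disjoint union of `k` copies of the cycle `C4` on four vertices: the vertex
`(i, a)` lies in the `i`-th copy. -/
def kC4 (k : ℕ) : SimpleGraph (Fin k × Fin 4) where
  Adj a b := a.1 = b.1 ∧ (SimpleGraph.cycleGraph 4).Adj a.2 b.2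
  symm := by
    constructor
    rintro ⟨i, a⟩ ⟨j, b⟩ ⟨h1, h2⟩
    exact ⟨h1.symm, h2.symm⟩
  loopless := by
    constructor
    rintro ⟨i, a⟩ ⟨-, h⟩
    exact (SimpleGraph.cycleGraph 4).loopless.irrefl a h

/-- `S` is a maximal induced forest of `G`: `G[S]` is acyclic and no proper superset of
`S` induces an acyclic subgraph. -/
def IsMaxInducedForest {V : Type} (G : SimpleGraph V) (S : Set V) : Prop :=
  (G.induce S).IsAcyclic ∧ ∀ T : Set V, S ⊂ T → ¬ (G.induce T).IsAcyclic

/-- `S` is a maximal induced tree of `G`: `G[S]` is acyclic and connected, and `S` is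
contained in no strictly larger set inducing a connected acyclic subgraph. -/
def IsMaxInducedTree {V : Type} (G : SimpleGraph V) (S : Set V) : Prop :=
  ((G.induce S).IsAcyclic ∧ (G.induce S).Connected) ∧
  ∀ T : Set V, S ⊂ T → ¬ ((G.induce T).IsAcyclic ∧ (G.induce T).Connected)

open SimpleGraph

variable {k : ℕ}

lemma kC4_adj {u v : Fin k × Fin 4} :
    (kC4 k).Adj u v ↔ u.1 = v.1 ∧ (cycleGraph 4).Adj u.2 v.2 := Iff.rfl

lemma induce_adj' {S : Set (Fin k × Fin 4)} {u v : S} (h : ((kC4 k).induce S).Adj u v) :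
    (u : Fin k × Fin 4).1 = (v : Fin k × Fin 4).1 ∧
      (cycleGraph 4).Adj (u : Fin k × Fin 4).2 (v : Fin k × Fin 4).2 := h

lemma walk_fst {S : Set (Fin k × Fin 4)} {u v : S} (p : ((kC4 k).induce S).Walk u v) :
    ∀ w ∈ p.support, (w : Fin k × Fin 4).1 = (u : Fin k × Fin 4).1 := by
  induction p with
  | nil => simp
  | cons h q ih =>
    intro w hw
    rw [SimpleGraph.Walk.support_cons] at hw
    rcases List.mem_cons.1 hw with rfl | hw
    · rfl
    · exact (ih w hw).trans (induce_adj' h).1.symm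

lemma not_acyclic_of_full {S : Set (Fin k × Fin 4)} {i : Fin k}
    (hfull : ∀ a : Fin 4, (i, a) ∈ S) : ¬ ((kC4 k).induce S).IsAcyclic := by
  intro hac
  set v0 : S := ⟨(i, 0), hfull 0⟩
  set v1 : S := ⟨(i, 1), hfull 1⟩
  set v2 : S := ⟨(i, 2), hfull 2⟩
  set v3 : S := ⟨(i, 3), hfull 3⟩
  have adj : ∀ a b : Fin 4, (cycleGraph 4).Adj a b →
      ((kC4 k).induce S).Adj ⟨(i, a), hfull a⟩ ⟨(i, b), hfull b⟩ := by
    intro a b hab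
    exact ⟨rfl, hab⟩
  have h01 : ((kC4 k).induce S).Adj v0 v1 := adj 0 1 (by decide)
  have h12 : ((kC4 k).induce S).Adj v1 v2 := adj 1 2 (by decide)
  have h23 : ((kC4 k).induce S).Adj v2 v3 := adj 2 3 (by decide)
  have h30 : ((kC4 k).induce S).Adj v3 v0 := adj 3 0 (by decide)
  set p : ((kC4 k).induce S).Walk v0 v0 :=
    .cons h01 (.cons h12 (.cons h23 (.cons h30 .nil)))
  refine hac p ?_
  rw [SimpleGraph.Walk.isCycle_def]
  refine ⟨?_, by simp [p], ?_⟩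
  · rw [SimpleGraph.Walk.isTrail_def]
    simp only [p, v0, v1, v2, v3, SimpleGraph.Walk.edges_cons, SimpleGraph.Walk.edges_nil,
      List.nodup_cons, List.mem_cons, List.not_mem_nil, or_false, List.nodup_nil,
      and_true, Sym2.eq, Sym2.rel_iff', Prod.mk.injEq, Prod.swap_prod_mk,
      Subtype.mk.injEq, eq_self_iff_true, true_and, List.mem_singleton, not_or]
    refine ⟨⟨?_, ?_, ?_⟩, ⟨?_, ?_⟩, ?_⟩ <;> decide
  · simp only [p, v0, v1, v2, v3, SimpleGraph.Walk.support_cons, SimpleGraph.Walk.support_nil,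
      List.tail_cons, List.nodup_cons, List.mem_cons, List.not_mem_nil, or_false,
      List.nodup_nil, and_true, List.mem_singleton, Subtype.mk.injEq, Prod.mk.injEq,
      eq_self_iff_true, true_and, not_or]
    refine ⟨⟨?_, ?_, ?_⟩, ⟨?_, ?_⟩, ?_⟩ <;> decide

lemma no_triangle : ∀ x y z : Fin 4, (cycleGraph 4).Adj x y → (cycleGraph 4).Adj y z →
    (cycleGraph 4).Adj z x → False := by decide

lemma acyclic_of_miss {S : Set (Fin k × Fin 4)}
    (h : ∀ i : Fin k, ∃ b, (i, b) ∉ S) : ((kC4 k).induce S).IsAcyclic := by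
  intro v p hp
  obtain ⟨b, hb⟩ := h (v : Fin k × Fin 4).1
  have hsupp := walk_fst p
  -- second coordinates of support vertices avoid b
  have hsnd : ∀ w ∈ p.support, (w : Fin k × Fin 4).2 ≠ b := by
    intro w hw hwb
    apply hb
    have : (w : Fin k × Fin 4) = ((v : Fin k × Fin 4).1, b) := by
      rw [← hsupp w hw, ← hwb]
    rw [← this]
    exact w.2
  have hnd : p.support.tail.Nodup := (SimpleGraph.Walk.isCycle_def _ |>.1 hp).2.2
  have hlen3 : p.length = 3 := by
    have hmapnd : (p.support.tail.map (fun (w : S) => (w : Fin k × Fin 4).2)).Nodup := by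
      refine hnd.map_on ?_
      intro x hx y hy hxy
      have hx' : x ∈ p.support := List.mem_of_mem_tail hx
      have hy' : y ∈ p.support := List.mem_of_mem_tail hy
      apply Subtype.ext
      apply Prod.ext
      · rw [hsupp x hx', hsupp y hy']
      · exact hxy
    have hsub : (p.support.tail.map (fun (w : S) => (w : Fin k × Fin 4).2)).toFinset ⊆
        Finset.univ.erase b := by
      intro x hx
      rw [List.mem_toFinset] at hx
      obtain ⟨w, hw, rfl⟩ := List.mem_map.1 hx
      exact Finset.mem_erase.2 ⟨hsnd w (List.mem_of_mem_tail hw), Finset.mem_univ _⟩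
    have hcard := Finset.card_le_card hsub
    rw [List.toFinset_card_of_nodup hmapnd] at hcard
    simp only [List.length_map] at hcard
    have : p.support.tail.length = p.length := by
      rw [List.length_tail, SimpleGraph.Walk.length_support]
      omega
    rw [this] at hcard
    have h3 := hp.three_le_length
    have : (Finset.univ.erase b).card = 3 := by
      rw [Finset.card_erase_of_mem (Finset.mem_univ _)]
      simp
    omega
  clear hsupp hsnd hnd hb
  cases p with
  | nil => simp at hlen3
  | cons h1 q =>
    cases q with
    | nil => simp at hlen3
    | cons h2 r =>
      cases r with
      | nil => simp at hlen3
      | cons h3 s =>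
        cases s with
        | cons h4 t => simp [SimpleGraph.Walk.length_cons] at hlen3
        | nil =>
          exact no_triangle _ _ _ (induce_adj' h1).2 (induce_adj' h2).2 (induce_adj' h3).2

/-- The vertex set of copy `i` with `b` removed. -/
def Tset (k : ℕ) (i : Fin k) (b : Fin 4) : Set (Fin k × Fin 4) :=
  {p | p.1 = i ∧ p.2 ≠ b}

lemma tset_acyclic {i : Fin k} {b : Fin 4} : ((kC4 k).induce (Tset k i b)).IsAcyclic := by
  apply acyclic_of_miss
  intro j
  exact ⟨b, fun hc => hc.2 rfl⟩

lemma fin4_ne1 : ∀ b : Fin 4, b + 1 ≠ b := by decide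
lemma fin4_ne2 : ∀ b : Fin 4, b + 2 ≠ b := by decide
lemma fin4_cases : ∀ b c : Fin 4, c ≠ b → c = b + 1 ∨ c = b + 2 ∨ c = b + 3 := by decide
lemma fin4_adj1 : ∀ b : Fin 4, (cycleGraph 4).Adj (b + 1) (b + 2) := by decide
lemma fin4_adj3 : ∀ b : Fin 4, (cycleGraph 4).Adj (b + 3) (b + 2) := by decide

lemma tset_connected {i : Fin k} {b : Fin 4} : ((kC4 k).induce (Tset k i b)).Connected := by
  have hmem : ∀ c : Fin 4, c ≠ b → (i, c) ∈ Tset k i b := fun c hc => ⟨rfl, hc⟩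
  set m : (Tset k i b) := ⟨(i, b + 2), hmem _ (fin4_ne2 b)⟩
  have key : ∀ x : (Tset k i b), ((kC4 k).induce (Tset k i b)).Reachable x m := by
    intro x
    have hx1 : (x : Fin k × Fin 4).1 = i := x.2.1
    have hx2 : (x : Fin k × Fin 4).2 ≠ b := x.2.2
    rcases fin4_cases b _ hx2 with hc | hc | hc
    · have hadj : (kC4 k).Adj (x : Fin k × Fin 4) ((i, b + 2) : Fin k × Fin 4) :=
        ⟨hx1, by rw [hc]; exact fin4_adj1 b⟩
      exact SimpleGraph.Adj.reachable hadj
    · have : x = m := Subtype.ext (Prod.ext hx1 hc)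
      rw [this]
    · have hadj : (kC4 k).Adj (x : Fin k × Fin 4) ((i, b + 2) : Fin k × Fin 4) :=
        ⟨hx1, by rw [hc]; exact fin4_adj3 b⟩
      exact SimpleGraph.Adj.reachable hadj
  rw [SimpleGraph.connected_iff]
  exact ⟨fun x y => (key x).trans (key y).symm, ⟨m⟩⟩

/-- The forest missing `f i` from copy `i`. -/
def Fset (k : ℕ) (f : Fin k → Fin 4) : Set (Fin k × Fin 4) := {p | p.2 ≠ f p.1}

lemma forest_iff {S : Set (Fin k × Fin 4)} :
    IsMaxInducedForest (kC4 k) S ↔ ∃ f : Fin k → Fin 4, S = Fset k f := by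
  constructor
  · rintro ⟨hac, hmax⟩
    have hex : ∀ i : Fin k, ∃ b, (i, b) ∉ S := by
      intro i
      by_contra hc
      push_neg at hc
      exact not_acyclic_of_full hc hac
    have huniq : ∀ i : Fin k, ∀ b c : Fin 4, (i, b) ∉ S → (i, c) ∉ S → b = c := by
      intro i b c hb hc
      by_contra hbc
      refine hmax (S ∪ {(i, b)}) ⟨Set.subset_union_left, fun hsub => hb (hsub (by simp))⟩ ?_
      apply acyclic_of_miss
      intro j
      by_cases hji : j = i
      · subst hji
        refine ⟨c, ?_⟩
        simp only [Set.mem_union, Set.mem_singleton_iff, Prod.mk.injEq]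
        push_neg
        exact ⟨hc, fun _ => Ne.symm hbc⟩
      · obtain ⟨b', hb'⟩ := hex j
        refine ⟨b', ?_⟩
        simp only [Set.mem_union, Set.mem_singleton_iff, Prod.mk.injEq]
        push_neg
        exact ⟨hb', fun h => absurd h hji⟩
    choose f hf using hex
    refine ⟨f, ?_⟩
    ext ⟨i, a⟩
    simp only [Fset, Set.mem_setOf_eq]
    constructor
    · intro hmem h
      exact hf i (h ▸ hmem)
    · intro hne
      by_contra hnm
      exact hne (huniq i a (f i) hnm (hf i))
  · rintro ⟨f, rfl⟩
    constructor
    · exact acyclic_of_miss fun i => ⟨f i, by simp [Fset]⟩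
    · intro T hT
      have hsub : Fset k f ⊆ T := hT.1
      obtain ⟨v, hvT, hvS⟩ := (Set.ssubset_iff_of_subset hsub).1 hT
      have hv2 : v.2 = f v.1 := by
        by_contra hc
        exact hvS hc
      apply not_acyclic_of_full (i := v.1)
      intro a
      by_cases ha : a = f v.1
      · rw [ha]
        have hve : (v.1, f v.1) = v := Prod.ext rfl hv2.symm
        rw [hve]
        exact hvT
      · exact hsub ha

lemma not_connected_two_copies {T : Set (Fin k × Fin 4)} {u v : Fin k × Fin 4}
    (hu : u ∈ T) (hv : v ∈ T) (huv : u.1 ≠ v.1) : ¬ ((kC4 k).induce T).Connected := by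
  intro hconn
  obtain ⟨p⟩ := hconn.preconnected ⟨u, hu⟩ ⟨v, hv⟩
  exact huv (walk_fst p _ (SimpleGraph.Walk.end_mem_support _)).symm

lemma tree_iff {S : Set (Fin k × Fin 4)} :
    IsMaxInducedTree (kC4 k) S ↔ ∃ (i : Fin k) (b : Fin 4), S = Tset k i b := by
  constructor
  · rintro ⟨⟨hac, hconn⟩, hmax⟩
    obtain ⟨v0⟩ := hconn.nonempty
    set i : Fin k := (v0 : Fin k × Fin 4).1 with hi
    have hcopy : ∀ p ∈ S, Prod.fst p = i := by
      intro p hp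
      obtain ⟨w⟩ := hconn.preconnected ⟨p, hp⟩ v0
      exact walk_fst w.reverse _ (SimpleGraph.Walk.end_mem_support _)
    have hex : ∃ b, (i, b) ∉ S := by
      by_contra hc
      push_neg at hc
      exact not_acyclic_of_full hc hac
    obtain ⟨b, hb⟩ := hex
    refine ⟨i, b, ?_⟩
    have hsub : S ⊆ Tset k i b := by
      intro p hp
      refine ⟨hcopy p hp, ?_⟩
      intro hb2
      apply hb
      have : (i, b) = p := by
        rw [← hcopy p hp, ← hb2]
      rw [this]
      exact hp
    by_contra hne
    exact hmax (Tset k i b) ⟨hsub, fun h => hne (Set.Subset.antisymm hsub h)⟩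
      ⟨tset_acyclic, tset_connected⟩
  · rintro ⟨i, b, rfl⟩
    refine ⟨⟨tset_acyclic, tset_connected⟩, ?_⟩
    intro T hT ⟨hTac, hTconn⟩
    have hsub : Tset k i b ⊆ T := hT.1
    obtain ⟨v, hvT, hvS⟩ := (Set.ssubset_iff_of_subset hsub).1 hT
    by_cases hv1 : v.1 = i
    · have hv2 : v.2 = b := by
        by_contra hc
        exact hvS ⟨hv1, hc⟩
      refine not_acyclic_of_full (i := i) ?_ hTac
      intro a
      by_cases ha : a = b
      · have : (i, a) = v := Prod.ext hv1.symm (by rw [ha, hv2])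
        rw [this]
        exact hvT
      · exact hsub ⟨rfl, ha⟩
    · have hm : (i, b + 1) ∈ T := hsub ⟨rfl, fin4_ne1 b⟩
      exact not_connected_two_copies hvT hm hv1 hTconn

lemma fset_injective : Function.Injective (Fset k) := by
  intro f g h
  funext i
  by_contra hne
  have h1 : (i, g i) ∈ Fset k f := fun hc => hne hc.symm
  rw [h] at h1
  exact h1 rfl

lemma tset_injective :
    Function.Injective (fun p : Fin k × Fin 4 => Tset k p.1 p.2) := by
  intro ⟨i, b⟩ ⟨j, c⟩ h
  simp only at h
  have h1 : (i, b + 1) ∈ Tset k i b := ⟨rfl, fin4_ne1 b⟩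
  rw [h] at h1
  obtain ⟨rfl, -⟩ := h1
  have h2 : (i, c) ∉ Tset k i c := fun hc => hc.2 rfl
  rw [← h] at h2
  simp only [Tset, Set.mem_setOf_eq, not_and, not_not] at h2
  exact Prod.ext rfl (h2 trivial).symm


/-- For every `k ≥ 1`, the disjoint union of `k` copies of `C4` has
exactly `4 ^ k` maximal induced forests and exactly `4 * k` maximal induced trees. -/
theorem maxForests_and_maxTrees_of_kC4 (k : ℕ) (hk : 1 ≤ k) :
    {S : Set (Fin k × Fin 4) | IsMaxInducedForest (kC4 k) S}.ncard = 4 ^ k ∧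
    {S : Set (Fin k × Fin 4) | IsMaxInducedTree (kC4 k) S}.ncard = 4 * k := by
  constructor
  · have : {S : Set (Fin k × Fin 4) | IsMaxInducedForest (kC4 k) S} = Set.range (Fset k) := by
      ext S
      simp only [Set.mem_setOf_eq, Set.mem_range, forest_iff]
      exact ⟨fun ⟨f, h⟩ => ⟨f, h.symm⟩, fun ⟨f, h⟩ => ⟨f, h.symm⟩⟩
    rw [this, ← Nat.card_coe_set_eq, Nat.card_range_of_injective fset_injective]
    simp [Nat.card_eq_fintype_card]
  · have : {S : Set (Fin k × Fin 4) | IsMaxInducedTree (kC4 k) S} =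
        Set.range (fun p : Fin k × Fin 4 => Tset k p.1 p.2) := by
      ext S
      simp only [Set.mem_setOf_eq, Set.mem_range, tree_iff]
      exact ⟨fun ⟨i, b, h⟩ => ⟨(i, b), h.symm⟩, fun ⟨⟨i, b⟩, h⟩ => ⟨i, b, h.symm⟩⟩
    rw [this, ← Nat.card_coe_set_eq, Nat.card_range_of_injective tset_injective]
    simp [Nat.card_eq_fintype_card, Nat.mul_comm]
end
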